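/- arXiv:1111.2622 — 9 statements merged into one kernel-verified Lean document; each statement's English description precedes it below -/
import Mathlib

section
/- Fix b ∈ (0, 1/2). The function p ↦ log R(p,b) is strictly convex on (1,∞), where R(p,b) = (b^{p−1}+(1−b)^{p−1})·(b^{1/(p−1)}+(1−b)^{1/(p−1)})^{p−1}. -/
open Real Set

noncomputable def R (p b : ℝ) : ℝ :=
  (b ^ (p - 1) + (1 - b) ^ (p - 1)) *
    (b ^ (1 / (p - 1)) + (1 - b) ^ (1 / (p - 1))) ^ (p - 1)

private noncomputable def Faux (a c p : ℝ) : ℝ :=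
  p * c + Real.log (1 + Real.exp (a * (p - 1))) +
    (p - 1) * Real.log (1 + Real.exp (a / (p - 1)))

private noncomputable def Faux' (a c p : ℝ) : ℝ :=
  c + a * (Real.exp (a * (p - 1)) / (1 + Real.exp (a * (p - 1))))
    + Real.log (1 + Real.exp (a / (p - 1)))
    - (a / (p - 1)) * (Real.exp (a / (p - 1)) / (1 + Real.exp (a / (p - 1))))

private lemma hasDerivAt_Faux (a c p : ℝ) (hp : 1 < p) :
    HasDerivAt (Faux a c) (Faux' a c p) p := by
  have hp0 : p - 1 ≠ 0 := by intro h; nlinarith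
  have hu : HasDerivAt (fun p : ℝ => a * (p - 1)) a p := by
    simpa using ((hasDerivAt_id p).sub_const 1).const_mul a
  have hv : HasDerivAt (fun p : ℝ => a / (p - 1)) (-a / (p - 1) ^ 2) p := by
    have := (hasDerivAt_const p a).div ((hasDerivAt_id p).sub_const 1) hp0
    refine this.congr_deriv ?_
    simp only [id]; ring
  have h2 : HasDerivAt (fun p : ℝ => Real.log (1 + Real.exp (a * (p - 1))))
      (Real.exp (a * (p - 1)) * a / (1 + Real.exp (a * (p - 1)))) p := by
    simpa using (hu.exp.const_add 1).log (by positivity)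
  have h3a : HasDerivAt (fun p : ℝ => Real.log (1 + Real.exp (a / (p - 1))))
      (Real.exp (a / (p - 1)) * (-a / (p - 1) ^ 2) / (1 + Real.exp (a / (p - 1)))) p := by
    simpa using (hv.exp.const_add 1).log (by positivity)
  have h3 := (((hasDerivAt_id p).sub_const 1)).mul h3a
  have h1 := (hasDerivAt_id p).mul_const c
  have H := (h1.add h2).add h3
  refine H.congr_deriv ?_
  simp only [Faux', id]
  have e1 : (0:ℝ) < 1 + Real.exp (a * (p - 1)) := by positivity
  have e2 : (0:ℝ) < 1 + Real.exp (a / (p - 1)) := by positivity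
  field_simp
  ring

private lemma hasDerivAt_Faux' (a c p : ℝ) (hp : 1 < p) :
    HasDerivAt (Faux' a c)
      (a ^ 2 * (Real.exp (a * (p - 1)) / (1 + Real.exp (a * (p - 1))) ^ 2)
        + a ^ 2 / (p - 1) ^ 3 * (Real.exp (a / (p - 1)) / (1 + Real.exp (a / (p - 1))) ^ 2)) p := by
  have hp0 : p - 1 ≠ 0 := by intro h; nlinarith
  have hu : HasDerivAt (fun p : ℝ => a * (p - 1)) a p := by
    simpa using ((hasDerivAt_id p).sub_const 1).const_mul a
  have hv : HasDerivAt (fun p : ℝ => a / (p - 1)) (-a / (p - 1) ^ 2) p := by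
    have := (hasDerivAt_const p a).div ((hasDerivAt_id p).sub_const 1) hp0
    refine this.congr_deriv ?_
    simp only [id]; ring
  have e1 : (0:ℝ) < 1 + Real.exp (a * (p - 1)) := by positivity
  have e2 : (0:ℝ) < 1 + Real.exp (a / (p - 1)) := by positivity
  have hσu : HasDerivAt
      (fun p : ℝ => Real.exp (a * (p - 1)) / (1 + Real.exp (a * (p - 1))))
      ((Real.exp (a * (p - 1)) * a * (1 + Real.exp (a * (p - 1)))
        - Real.exp (a * (p - 1)) * (Real.exp (a * (p - 1)) * a)) /
        (1 + Real.exp (a * (p - 1))) ^ 2) p := by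
    exact (hu.exp).div (hu.exp.const_add 1) e1.ne'
  have hσv : HasDerivAt
      (fun p : ℝ => Real.exp (a / (p - 1)) / (1 + Real.exp (a / (p - 1))))
      ((Real.exp (a / (p - 1)) * (-a / (p - 1) ^ 2) * (1 + Real.exp (a / (p - 1)))
        - Real.exp (a / (p - 1)) * (Real.exp (a / (p - 1)) * (-a / (p - 1) ^ 2))) /
        (1 + Real.exp (a / (p - 1))) ^ 2) p := by
    exact (hv.exp).div (hv.exp.const_add 1) e2.ne'
  have h3a : HasDerivAt (fun p : ℝ => Real.log (1 + Real.exp (a / (p - 1))))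
      (Real.exp (a / (p - 1)) * (-a / (p - 1) ^ 2) / (1 + Real.exp (a / (p - 1)))) p := by
    simpa using (hv.exp.const_add 1).log (by positivity)
  have H := (((hasDerivAt_const p c).add (hσu.const_mul a)).add h3a).sub (hv.mul hσv)
  refine H.congr_deriv ?_
  field_simp
  ring

private lemma strictConvexOn_Faux (a c : ℝ) (ha : 0 < a) :
    StrictConvexOn ℝ (Set.Ioi (1:ℝ)) (Faux a c) := by
  apply strictConvexOn_of_deriv2_pos (convex_Ioi 1)
  · exact fun p hp => (hasDerivAt_Faux a c p hp).continuousAt.continuousWithinAt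
  · intro p hp
    rw [interior_Ioi] at hp
    have hd2 : deriv (deriv (Faux a c)) p =
        a ^ 2 * (Real.exp (a * (p - 1)) / (1 + Real.exp (a * (p - 1))) ^ 2)
        + a ^ 2 / (p - 1) ^ 3 * (Real.exp (a / (p - 1)) / (1 + Real.exp (a / (p - 1))) ^ 2) := by
      have hev : deriv (Faux a c) =ᶠ[nhds p] Faux' a c := by
        filter_upwards [Ioi_mem_nhds hp] with y hy using (hasDerivAt_Faux a c y hy).deriv
      rw [hev.deriv_eq]
      exact (hasDerivAt_Faux' a c p hp).deriv
    have : deriv^[2] (Faux a c) p = deriv (deriv (Faux a c)) p := rfl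
    rw [this, hd2]
    have hp1 : 0 < p - 1 := sub_pos.mpr hp
    have := Real.exp_pos (a * (p - 1))
    have := Real.exp_pos (a / (p - 1))
    positivity

private lemma strictConvexOn_congr' {f g : ℝ → ℝ} {s : Set ℝ} (hg : StrictConvexOn ℝ s g)
    (h : Set.EqOn f g s) : StrictConvexOn ℝ s f := by
  refine ⟨hg.1, fun x hx y hy hxy aa bb haa hbb hab => ?_⟩
  rw [h hx, h hy, h (hg.1 hx hy haa.le hbb.le hab)]
  exact hg.2 hx hy hxy haa hbb hab

theorem stmt8 (b : ℝ) (hb : b ∈ Set.Ioo (0:ℝ) (1/2)) :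
    StrictConvexOn ℝ (Set.Ioi (1:ℝ)) (fun p => Real.log (R p b)) := by
  obtain ⟨hb0, hb2⟩ := hb
  have hb1 : (0:ℝ) < 1 - b := by linarith
  set a := Real.log ((1 - b) / b) with hadef
  have ha : 0 < a := Real.log_pos (by rw [lt_div_iff₀ hb0]; linarith)
  have hasum : Real.log (1 - b) = Real.log b + a := by
    rw [hadef, Real.log_div hb1.ne' hb0.ne']; ring
  apply strictConvexOn_congr' (strictConvexOn_Faux a (Real.log b) ha)
  intro p hp
  have hp1 : (0:ℝ) < p - 1 := by simpa using sub_pos.mpr (show 1 < p from hp)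
  have hp0 : p - 1 ≠ 0 := hp1.ne'
  have key : ∀ t : ℝ, b ^ t + (1 - b) ^ t
      = Real.exp (Real.log b * t) * (1 + Real.exp (a * t)) := by
    intro t
    rw [Real.rpow_def_of_pos hb0, Real.rpow_def_of_pos hb1, hasum]
    rw [mul_add, add_mul, Real.exp_add]
    ring
  have keylog : ∀ t : ℝ, Real.log (b ^ t + (1 - b) ^ t)
      = Real.log b * t + Real.log (1 + Real.exp (a * t)) := by
    intro t
    rw [key t, Real.log_mul (Real.exp_ne_zero _) (by positivity), Real.log_exp]
  have hY : (0:ℝ) < b ^ (1 / (p - 1)) + (1 - b) ^ (1 / (p - 1)) := by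
    have := Real.rpow_pos_of_pos hb0 (1 / (p - 1))
    have := Real.rpow_pos_of_pos hb1 (1 / (p - 1))
    linarith
  have hX : (0:ℝ) < b ^ (p - 1) + (1 - b) ^ (p - 1) := by
    have := Real.rpow_pos_of_pos hb0 (p - 1)
    have := Real.rpow_pos_of_pos hb1 (p - 1)
    linarith
  show Real.log (R p b) = _
  rw [R, Real.log_mul hX.ne' (by positivity), Real.log_rpow hY, keylog, keylog]
  simp only [Faux]
  have h1 : a * (1 / (p - 1)) = a / (p - 1) := by ring
  rw [h1]
  field_simp
  ring
end

section
/- Fix b ∈ (0,1/2). The function p ↦ R(p,b) attains its minimum on (1,∞) at p = 2: it is decreasing on (1,2] and increasing on [2,∞), with R(2,b) = 1; in particular R(p,b) ≥ 1 for all p ∈ (1,∞), with equality iff p = 2. -/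
open Real Set

/-! Auxiliary lemmas -/

lemma amgm_lt {x y a : ℝ} (hx : 0 < x) (hy : 0 < y) (hxy : x ≠ y)
    (ha : 0 < a) (ha' : a < 1) : x ^ a * y ^ (1 - a) < a * x + (1 - a) * y := by
  have h := strictConcaveOn_log_Ioi.2 (mem_Ioi.2 hx) (mem_Ioi.2 hy) hxy ha
    (show (0:ℝ) < 1 - a by linarith) (by ring)
  simp only [smul_eq_mul] at h
  have hx' : x ^ a = exp (a * log x) := by rw [rpow_def_of_pos hx, mul_comm]
  have hy' : y ^ (1-a) = exp ((1-a) * log y) := by rw [rpow_def_of_pos hy, mul_comm]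
  have hpos : 0 < a * x + (1 - a) * y := by
    have : 0 < 1 - a := by linarith
    positivity
  calc x ^ a * y ^ (1-a) = exp (a * log x + (1-a) * log y) := by rw [hx', hy', ← exp_add]
    _ < exp (log (a * x + (1-a) * y)) := exp_lt_exp.2 h
    _ = a * x + (1-a) * y := exp_log hpos

lemma amgm_le {x y a : ℝ} (hx : 0 ≤ x) (hy : 0 ≤ y)
    (ha : 0 ≤ a) (ha' : a ≤ 1) : x ^ a * y ^ (1 - a) ≤ a * x + (1 - a) * y :=
  Real.geom_mean_le_arith_mean2_weighted ha (by linarith) hx hy (by ring)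

lemma holder_term {x y S T a : ℝ} (hx : 0 < x) (hy : 0 < y) (hS : 0 < S) (hT : 0 < T) :
    x ^ a * y ^ (1-a) = (S ^ a * T ^ (1-a)) * ((x/S) ^ a * ((y/T) ^ (1-a))) := by
  rw [Real.div_rpow hx.le hS.le, Real.div_rpow hy.le hT.le]
  have h1 : S ^ a ≠ 0 := (Real.rpow_pos_of_pos hS a).ne'
  have h2 : T ^ (1-a) ≠ 0 := (Real.rpow_pos_of_pos hT (1-a)).ne'
  field_simp

lemma holder_le' {x1 x2 y1 y2 a : ℝ} (hx1 : 0 < x1) (hx2 : 0 < x2) (hy1 : 0 < y1)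
    (hy2 : 0 < y2) (ha : 0 ≤ a) (ha' : a ≤ 1) :
    x1 ^ a * y1 ^ (1-a) + x2 ^ a * y2 ^ (1-a) ≤ (x1+x2) ^ a * (y1+y2) ^ (1-a) := by
  have hS : 0 < x1 + x2 := by linarith
  have hT : 0 < y1 + y2 := by linarith
  have hP : 0 < (x1+x2) ^ a * (y1+y2) ^ (1-a) := by positivity
  rw [holder_term hx1 hy1 hS hT, holder_term hx2 hy2 hS hT, ← mul_add]
  have h1 : (x1/(x1+x2)) ^ a * ((y1/(y1+y2)) ^ (1-a)) ≤ a * (x1/(x1+x2)) + (1-a) * (y1/(y1+y2)) :=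
    amgm_le (by positivity) (by positivity) ha ha'
  have h2 : (x2/(x1+x2)) ^ a * ((y2/(y1+y2)) ^ (1-a)) ≤ a * (x2/(x1+x2)) + (1-a) * (y2/(y1+y2)) :=
    amgm_le (by positivity) (by positivity) ha ha'
  have hsum : a * (x1/(x1+x2)) + (1-a) * (y1/(y1+y2)) + (a * (x2/(x1+x2)) + (1-a) * (y2/(y1+y2))) = 1 := by
    field_simp
    ring
  calc ((x1+x2) ^ a * (y1+y2) ^ (1-a)) * ((x1/(x1+x2)) ^ a * ((y1/(y1+y2)) ^ (1-a)) + (x2/(x1+x2)) ^ a * ((y2/(y1+y2)) ^ (1-a)))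
      ≤ ((x1+x2) ^ a * (y1+y2) ^ (1-a)) * 1 := by
        apply mul_le_mul_of_nonneg_left _ hP.le
        calc _ ≤ _ := add_le_add h1 h2
        _ = 1 := hsum
    _ = _ := mul_one _

lemma holder_lt' {x1 x2 y1 y2 a : ℝ} (hx1 : 0 < x1) (hx2 : 0 < x2) (hy1 : 0 < y1)
    (hy2 : 0 < y2) (ha : 0 < a) (ha' : a < 1) (hne : x1 * y2 ≠ x2 * y1) :
    x1 ^ a * y1 ^ (1-a) + x2 ^ a * y2 ^ (1-a) < (x1+x2) ^ a * (y1+y2) ^ (1-a) := by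
  have hS : 0 < x1 + x2 := by linarith
  have hT : 0 < y1 + y2 := by linarith
  have hP : 0 < (x1+x2) ^ a * (y1+y2) ^ (1-a) := by positivity
  have hratio : x1/(x1+x2) ≠ y1/(y1+y2) := by
    intro h
    apply hne
    field_simp at h
    nlinarith [h]
  rw [holder_term hx1 hy1 hS hT, holder_term hx2 hy2 hS hT, ← mul_add]
  have h1 : (x1/(x1+x2)) ^ a * ((y1/(y1+y2)) ^ (1-a)) < a * (x1/(x1+x2)) + (1-a) * (y1/(y1+y2)) :=
    amgm_lt (by positivity) (by positivity) hratio ha ha'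
  have h2 : (x2/(x1+x2)) ^ a * ((y2/(y1+y2)) ^ (1-a)) ≤ a * (x2/(x1+x2)) + (1-a) * (y2/(y1+y2)) :=
    amgm_le (by positivity) (by positivity) ha.le ha'.le
  have hsum : a * (x1/(x1+x2)) + (1-a) * (y1/(y1+y2)) + (a * (x2/(x1+x2)) + (1-a) * (y2/(y1+y2))) = 1 := by
    field_simp
    ring
  calc ((x1+x2) ^ a * (y1+y2) ^ (1-a)) * ((x1/(x1+x2)) ^ a * ((y1/(y1+y2)) ^ (1-a)) + (x2/(x1+x2)) ^ a * ((y2/(y1+y2)) ^ (1-a)))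
      < ((x1+x2) ^ a * (y1+y2) ^ (1-a)) * 1 := by
        apply mul_lt_mul_of_pos_left _ hP
        calc _ < _ := add_lt_add_of_lt_of_le h1 h2
        _ = 1 := hsum
    _ = _ := mul_one _

lemma rpow_split {x u s t a : ℝ} (hx : 0 < x) (hu : u = a*s + (1-a)*t) :
    x ^ u = (x ^ s) ^ a * (x ^ t) ^ (1-a) := by
  rw [hu, rpow_add hx, mul_comm a s, mul_comm (1-a) t, rpow_mul hx.le, rpow_mul hx.le]

lemma L_conv_le {b : ℝ} (hb : 0 < b) (hb1 : b < 1) {s t a u : ℝ} (ha : 0 ≤ a) (ha' : a ≤ 1)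
    (hu : u = a*s + (1-a)*t) :
    log (b^u + (1-b)^u) ≤ a * log (b^s + (1-b)^s) + (1-a) * log (b^t + (1-b)^t) := by
  have hc : 0 < 1 - b := by linarith
  have hbs := rpow_pos_of_pos hb s; have hbt := rpow_pos_of_pos hb t
  have hcs := rpow_pos_of_pos hc s; have hct := rpow_pos_of_pos hc t
  rw [rpow_split hb hu, rpow_split hc hu]
  calc log ((b^s)^a * (b^t)^(1-a) + ((1-b)^s)^a * ((1-b)^t)^(1-a))
      ≤ log ((b^s + (1-b)^s)^a * (b^t + (1-b)^t)^(1-a)) := by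
        apply Real.log_le_log (by positivity)
        exact holder_le' hbs hcs hbt hct ha ha'
    _ = a * log (b^s + (1-b)^s) + (1-a) * log (b^t + (1-b)^t) := by
        rw [Real.log_mul (by positivity) (by positivity), Real.log_rpow (by positivity),
          Real.log_rpow (by positivity)]

lemma L_conv_lt {b : ℝ} (hb : 0 < b) (hb2 : b < 1/2) {s t a u : ℝ} (ha : 0 < a) (ha' : a < 1)
    (hst : s ≠ t) (hu : u = a*s + (1-a)*t) :
    log (b^u + (1-b)^u) < a * log (b^s + (1-b)^s) + (1-a) * log (b^t + (1-b)^t) := by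
  have hc : 0 < 1 - b := by linarith
  have hbs := rpow_pos_of_pos hb s; have hbt := rpow_pos_of_pos hb t
  have hcs := rpow_pos_of_pos hc s; have hct := rpow_pos_of_pos hc t
  have hne : b^s * (1-b)^t ≠ (1-b)^s * b^t := by
    intro h
    have hr : 0 < b / (1-b) := by positivity
    have hr1 : b / (1-b) < 1 := by rw [div_lt_one hc]; linarith
    have key : (b/(1-b)) ^ s = (b/(1-b)) ^ t := by
      rw [Real.div_rpow hb.le hc.le, Real.div_rpow hb.le hc.le]
      rw [div_eq_div_iff hcs.ne' hct.ne']
      linarith [h]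
    rcases lt_trichotomy s t with h' | h' | h'
    · exact absurd key (ne_of_gt (rpow_lt_rpow_of_exponent_gt hr hr1 h'))
    · exact hst h'
    · exact absurd key (ne_of_lt (rpow_lt_rpow_of_exponent_gt hr hr1 h'))
  rw [rpow_split hb hu, rpow_split hc hu]
  calc log ((b^s)^a * (b^t)^(1-a) + ((1-b)^s)^a * ((1-b)^t)^(1-a))
      < log ((b^s + (1-b)^s)^a * (b^t + (1-b)^t)^(1-a)) := by
        apply Real.log_lt_log (by positivity)
        exact holder_lt' hbs hcs hbt hct ha ha' hne
    _ = a * log (b^s + (1-b)^s) + (1-a) * log (b^t + (1-b)^t) := by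
        rw [Real.log_mul (by positivity) (by positivity), Real.log_rpow (by positivity),
          Real.log_rpow (by positivity)]

lemma L_one {b : ℝ} : log (b^(1:ℝ) + (1-b)^(1:ℝ)) = 0 := by
  rw [rpow_one, rpow_one, show b + (1-b) = 1 by ring, log_one]

lemma g_pos {b : ℝ} (hb : 0 < b) (hb2 : b < 1/2) {q : ℝ} (hq : 0 < q) (hq1 : q ≠ 1) :
    0 < log (b^q + (1-b)^q) + q * log (b^(1/q) + (1-b)^(1/q)) := by
  set a : ℝ := 1/(q+1) with ha_def
  have hq1' : 0 < q + 1 := by linarith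
  have ha : 0 < a := by positivity
  have ha' : a < 1 := by rw [ha_def, div_lt_one hq1']; linarith
  have hst : q ≠ 1/q := by
    intro h
    have h2 : q * q = 1 := by
      have := congrArg (fun x => x * q) h
      simpa [one_div, inv_mul_cancel₀ hq.ne'] using this
    rcases lt_trichotomy q 1 with h' | h' | h'
    · nlinarith
    · exact hq1 h'
    · nlinarith
  have hu : (1:ℝ) = a * q + (1-a) * (1/q) := by
    rw [ha_def]; field_simp; ring
  have h := L_conv_lt hb hb2 ha ha' hst hu
  rw [L_one] at h
  have h2 : 0 < (q+1) * (a * log (b^q + (1-b)^q) + (1-a) * log (b^(1/q) + (1-b)^(1/q))) :=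
    mul_pos hq1' h
  have h3 : (q+1) * (a * log (b^q + (1-b)^q) + (1-a) * log (b^(1/q) + (1-b)^(1/q)))
      = log (b^q + (1-b)^q) + q * log (b^(1/q) + (1-b)^(1/q)) := by
    rw [ha_def]; field_simp; ring
  linarith [h3 ▸ h2]

lemma g_mono {b : ℝ} (hb : 0 < b) (hb2 : b < 1/2) {q1 q2 : ℝ} (hq1 : 1 ≤ q1) (h12 : q1 < q2) :
    log (b^q1 + (1-b)^q1) + q1 * log (b^(1/q1) + (1-b)^(1/q1)) <
    log (b^q2 + (1-b)^q2) + q2 * log (b^(1/q2) + (1-b)^(1/q2)) := by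
  have hq10 : 0 < q1 := by linarith
  have hq21 : (0:ℝ) < q2 - 1 := by linarith
  have h10 : q1 ≠ 0 := hq10.ne'
  have h20 : q2 ≠ 0 := (by linarith : (0:ℝ) < q2).ne'
  have h21 : q2 - 1 ≠ 0 := hq21.ne'
  set t : ℝ := (q1-1)/(q2-1) with ht_def
  have ht0 : 0 ≤ t := div_nonneg (by linarith) (by linarith)
  have ht1 : t < 1 := by rw [ht_def, div_lt_one hq21]; linarith
  have h1 : log (b^q1 + (1-b)^q1) ≤ t * log (b^q2 + (1-b)^q2) +
      (1-t) * log (b^(1:ℝ) + (1-b)^(1:ℝ)) :=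
    L_conv_le hb (by linarith) ht0 ht1.le (by rw [ht_def]; field_simp; ring)
  set s : ℝ := q2*(q1-1)/(q1*(q2-1)) with hs_def
  have hs0 : 0 ≤ s := by
    apply div_nonneg (by nlinarith) (by nlinarith)
  have hs1 : s ≤ 1 := by
    rw [hs_def, div_le_one (by nlinarith)]; nlinarith
  have h2 : log (b^(1/q1) + (1-b)^(1/q1)) ≤ s * log (b^(1/q2) + (1-b)^(1/q2)) +
      (1-s) * log (b^(1:ℝ) + (1-b)^(1:ℝ)) :=
    L_conv_le hb (by linarith) hs0 hs1 (by rw [hs_def]; field_simp [h10, h20, h21]; ring)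
  rw [L_one] at h1 h2
  have key : q1 * s = t * q2 := by rw [hs_def, ht_def]; field_simp
  have hg2 : 0 < log (b^q2 + (1-b)^q2) + q2 * log (b^(1/q2) + (1-b)^(1/q2)) :=
    g_pos hb hb2 (by linarith) (by intro h; linarith)
  have step : log (b^q1 + (1-b)^q1) + q1 * log (b^(1/q1) + (1-b)^(1/q1)) ≤
      t * (log (b^q2 + (1-b)^q2) + q2 * log (b^(1/q2) + (1-b)^(1/q2))) := by
    have h2' : q1 * log (b^(1/q1) + (1-b)^(1/q1)) ≤ q1 * (s * log (b^(1/q2) + (1-b)^(1/q2))) :=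
      mul_le_mul_of_nonneg_left (by linarith) hq10.le
    have h2'' : q1 * log (b^(1/q1) + (1-b)^(1/q1)) ≤ t * (q2 * log (b^(1/q2) + (1-b)^(1/q2))) := by
      calc q1 * log (b^(1/q1) + (1-b)^(1/q1)) ≤ q1 * (s * log (b^(1/q2) + (1-b)^(1/q2))) := h2'
        _ = (q1 * s) * log (b^(1/q2) + (1-b)^(1/q2)) := by ring
        _ = (t * q2) * log (b^(1/q2) + (1-b)^(1/q2)) := by rw [key]
        _ = t * (q2 * log (b^(1/q2) + (1-b)^(1/q2))) := by ring
    calc log (b^q1 + (1-b)^q1) + q1 * log (b^(1/q1) + (1-b)^(1/q1))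
        ≤ t * log (b^q2 + (1-b)^q2) + t * (q2 * log (b^(1/q2) + (1-b)^(1/q2))) :=
          add_le_add (by linarith) h2''
      _ = t * (log (b^q2 + (1-b)^q2) + q2 * log (b^(1/q2) + (1-b)^(1/q2))) := by ring
  nlinarith [step, hg2, ht1, mul_pos (sub_pos.2 ht1) hg2]

lemma g_anti {b : ℝ} (hb : 0 < b) (hb2 : b < 1/2) {q1 q2 : ℝ} (hq1 : 0 < q1) (h12 : q1 < q2)
    (hq2 : q2 ≤ 1) :
    log (b^q2 + (1-b)^q2) + q2 * log (b^(1/q2) + (1-b)^(1/q2)) <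
    log (b^q1 + (1-b)^q1) + q1 * log (b^(1/q1) + (1-b)^(1/q1)) := by
  have hq20 : 0 < q2 := by linarith
  have hq11 : (0:ℝ) < 1 - q1 := by linarith
  have h10 : q1 ≠ 0 := hq1.ne'
  have h20 : q2 ≠ 0 := hq20.ne'
  have h11 : 1 - q1 ≠ 0 := hq11.ne'
  set t : ℝ := (1-q2)/(1-q1) with ht_def
  have ht0 : 0 ≤ t := div_nonneg (by linarith) (by linarith)
  have ht1 : t < 1 := by rw [ht_def, div_lt_one hq11]; linarith
  have h1 : log (b^q2 + (1-b)^q2) ≤ t * log (b^q1 + (1-b)^q1) +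
      (1-t) * log (b^(1:ℝ) + (1-b)^(1:ℝ)) :=
    L_conv_le hb (by linarith) ht0 ht1.le (by rw [ht_def]; field_simp; ring)
  set s : ℝ := q1*(1-q2)/(q2*(1-q1)) with hs_def
  have hs0 : 0 ≤ s := by
    apply div_nonneg (by nlinarith) (by nlinarith)
  have hs1 : s ≤ 1 := by
    rw [hs_def, div_le_one (by nlinarith)]; nlinarith
  have h2 : log (b^(1/q2) + (1-b)^(1/q2)) ≤ s * log (b^(1/q1) + (1-b)^(1/q1)) +
      (1-s) * log (b^(1:ℝ) + (1-b)^(1:ℝ)) :=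
    L_conv_le hb (by linarith) hs0 hs1 (by rw [hs_def]; field_simp [h10, h20, h11]; ring)
  rw [L_one] at h1 h2
  have key : q2 * s = t * q1 := by rw [hs_def, ht_def]; field_simp
  have hg1 : 0 < log (b^q1 + (1-b)^q1) + q1 * log (b^(1/q1) + (1-b)^(1/q1)) :=
    g_pos hb hb2 hq1 (by intro h; linarith)
  have step : log (b^q2 + (1-b)^q2) + q2 * log (b^(1/q2) + (1-b)^(1/q2)) ≤
      t * (log (b^q1 + (1-b)^q1) + q1 * log (b^(1/q1) + (1-b)^(1/q1))) := by
    have h2' : q2 * log (b^(1/q2) + (1-b)^(1/q2)) ≤ q2 * (s * log (b^(1/q1) + (1-b)^(1/q1))) :=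
      mul_le_mul_of_nonneg_left (by linarith) hq20.le
    have h2'' : q2 * log (b^(1/q2) + (1-b)^(1/q2)) ≤ t * (q1 * log (b^(1/q1) + (1-b)^(1/q1))) := by
      calc q2 * log (b^(1/q2) + (1-b)^(1/q2)) ≤ q2 * (s * log (b^(1/q1) + (1-b)^(1/q1))) := h2'
        _ = (q2 * s) * log (b^(1/q1) + (1-b)^(1/q1)) := by ring
        _ = (t * q1) * log (b^(1/q1) + (1-b)^(1/q1)) := by rw [key]
        _ = t * (q1 * log (b^(1/q1) + (1-b)^(1/q1))) := by ring
    calc log (b^q2 + (1-b)^q2) + q2 * log (b^(1/q2) + (1-b)^(1/q2))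
        ≤ t * log (b^q1 + (1-b)^q1) + t * (q1 * log (b^(1/q1) + (1-b)^(1/q1))) :=
          add_le_add (by linarith) h2''
      _ = t * (log (b^q1 + (1-b)^q1) + q1 * log (b^(1/q1) + (1-b)^(1/q1))) := by ring
  nlinarith [step, hg1, ht1, mul_pos (sub_pos.2 ht1) hg1]

lemma R_pos {b : ℝ} (hb : 0 < b) (hb1 : b < 1) (p : ℝ) : 0 < R p b := by
  have hc : 0 < 1 - b := by linarith
  unfold R
  positivity

lemma R_eq_exp {b : ℝ} (hb : 0 < b) (hb1 : b < 1) (p : ℝ) :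
    R p b = exp (log (b^(p-1) + (1-b)^(p-1)) +
      (p-1) * log (b^(1/(p-1)) + (1-b)^(1/(p-1)))) := by
  have hc : 0 < 1 - b := by linarith
  have h1 : 0 < b^(p-1) + (1-b)^(p-1) := by positivity
  have h2 : 0 < b^(1/(p-1)) + (1-b)^(1/(p-1)) := by positivity
  rw [← exp_log (R_pos hb hb1 p)]
  congr 1
  unfold R
  rw [Real.log_mul h1.ne' (rpow_pos_of_pos h2 (p-1)).ne', Real.log_rpow h2]

theorem stmt9 (b : ℝ) (hb : b ∈ Set.Ioo (0:ℝ) (1/2)) :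
    StrictAntiOn (fun p => R p b) (Set.Ioc (1:ℝ) 2) ∧
    StrictMonoOn (fun p => R p b) (Set.Ici (2:ℝ)) ∧
    R 2 b = 1 ∧
    ∀ p ∈ Set.Ioi (1:ℝ), 1 ≤ R p b ∧ (R p b = 1 ↔ p = 2) := by
  obtain ⟨hb0, hb2⟩ := hb
  have hb1 : b < 1 := by linarith
  have hR2 : R 2 b = 1 := by
    unfold R
    norm_num
  refine ⟨?_, ?_, hR2, ?_⟩
  · intro p1 hp1 p2 hp2 h12
    simp only
    rw [R_eq_exp hb0 hb1, R_eq_exp hb0 hb1]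
    apply exp_lt_exp.2
    exact g_anti hb0 hb2 (by linarith [hp1.1] : 0 < p1 - 1) (by linarith) (by linarith [hp2.2])
  · intro p1 hp1 p2 hp2 h12
    simp only
    rw [R_eq_exp hb0 hb1, R_eq_exp hb0 hb1]
    apply exp_lt_exp.2
    exact g_mono hb0 hb2 (by simp only [mem_Ici] at hp1; linarith) (by linarith)
  · intro p hp
    simp only [mem_Ioi] at hp
    by_cases hp2 : p = 2
    · subst hp2; simp [hR2]
    · have hg : 0 < log (b^(p-1) + (1-b)^(p-1)) +
          (p-1) * log (b^(1/(p-1)) + (1-b)^(1/(p-1))) :=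
        g_pos hb0 hb2 (by linarith) (fun h => hp2 (by linarith))
      have hR : 1 < R p b := by
        rw [R_eq_exp hb0 hb1]
        calc (1:ℝ) = exp 0 := by rw [exp_zero]
          _ < _ := exp_lt_exp.2 hg
      refine ⟨hR.le, fun h => ?_, fun h => absurd h hp2⟩
      exact absurd (h ▸ hR) (lt_irrefl 1)
end

section
/- For p > 1 and b ∈ (0,1), with φ(t) = (1−b)|b−t|^p + b|1−b+t|^p and t_b = b − b^{1/(p−1)}/(b^{1/(p−1)}+(1−b)^{1/(p−1)}), one has φ(0)/φ(t_b) = R(p,b) = (b^{p−1}+(1−b)^{p−1})·(b^{1/(p−1)}+(1−b)^{1/(p−1)})^{p−1}. -/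
open Real Set

noncomputable def phi (p b t : ℝ) : ℝ :=
  (1 - b) * |b - t| ^ p + b * |1 - b + t| ^ p

noncomputable def tOpt (p b : ℝ) : ℝ :=
  b - b ^ (1 / (p - 1)) / (b ^ (1 / (p - 1)) + (1 - b) ^ (1 / (p - 1)))

theorem stmt11 (p b : ℝ) (hp : 1 < p) (hb : b ∈ Set.Ioo (0:ℝ) 1) :
    phi p b 0 / phi p b (tOpt p b) = R p b := by
  obtain ⟨hb0, hb1⟩ := hb
  have hb1' : 0 < 1 - b := by linarith
  have hp1 : p - 1 ≠ 0 := sub_ne_zero.mpr hp.ne'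
  set a := b ^ (1 / (p - 1)) with ha_def
  set c := (1 - b) ^ (1 / (p - 1)) with hc_def
  have ha : 0 < a := Real.rpow_pos_of_pos hb0 _
  have hc : 0 < c := Real.rpow_pos_of_pos hb1' _
  have hs : 0 < a + c := by linarith
  have h1 : b - tOpt p b = a / (a + c) := by
    simp only [tOpt, ← ha_def, ← hc_def]; ring
  have h2 : 1 - b + tOpt p b = c / (a + c) := by
    simp only [tOpt, ← ha_def, ← hc_def]
    field_simp
    ring
  have hexp : 1 / (p - 1) * p = 1 + 1 / (p - 1) := by field_simp; ring
  have hap : a ^ p = b * a := by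
    rw [ha_def, ← Real.rpow_mul hb0.le, hexp, Real.rpow_add hb0, Real.rpow_one]
  have hcp : c ^ p = (1 - b) * c := by
    rw [hc_def, ← Real.rpow_mul hb1'.le, hexp, Real.rpow_add hb1', Real.rpow_one]
  have hphi_t : phi p b (tOpt p b) = b * (1 - b) * (a + c) / (a + c) ^ p := by
    rw [phi, h1, h2, abs_of_pos (by positivity), abs_of_pos (by positivity),
      Real.div_rpow ha.le hs.le, Real.div_rpow hc.le hs.le, hap, hcp]
    field_simp
  have hbp : b ^ p = b * b ^ (p - 1) := by
    nth_rewrite 1 [show p = 1 + (p - 1) by ring]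
    rw [Real.rpow_add hb0, Real.rpow_one]
  have hbp' : (1 - b) ^ p = (1 - b) * (1 - b) ^ (p - 1) := by
    nth_rewrite 1 [show p = 1 + (p - 1) by ring]
    rw [Real.rpow_add hb1', Real.rpow_one]
  have hphi_0 : phi p b 0 = b * (1 - b) * (b ^ (p - 1) + (1 - b) ^ (p - 1)) := by
    rw [phi]
    rw [sub_zero, add_zero, abs_of_pos hb0, abs_of_pos hb1', hbp, hbp']
    ring
  have hsp : (a + c) ^ (p - 1) = (a + c) ^ p / (a + c) := by
    rw [Real.rpow_sub hs, Real.rpow_one]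
  rw [hphi_t, hphi_0, R, ← ha_def, ← hc_def, hsp]
  have hspow : (0:ℝ) < (a + c) ^ p := Real.rpow_pos_of_pos hs _
  field_simp
end

section
/- For every real random variable X with E|X|^3 < ∞, one has E|X − EX|^3 ≤ C_3 · E|X|^3, where C_3 = (17 + 7√7)/27 ≈ 1.3157. -/
open Real

lemma reg1 (C t A x : ℝ) (hC1 : 1.3 < C) (ht0 : 0.55 < t) (hx : 1 ≤ x)
    (I : t ^ 2 * ((1 - C) * (x-1) ^ 3 - 3 * C * (x-1) ^ 2 - (3 * C + A) * (x-1) - C)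
      = ((x-1) - t) ^ 2 * ((1 - C) * t ^ 2 * (x-1) - C)) :
    (x - 1) ^ 3 ≤ C * x ^ 3 + A * (x - 1) := by
  have h1 : (1 - C) * t ^ 2 * (x-1) - C ≤ 0 := by
    nlinarith [mul_nonneg (sq_nonneg t) (by linarith : (0:ℝ) ≤ x - 1)]
  have h2 : ((x-1) - t) ^ 2 * ((1 - C) * t ^ 2 * (x-1) - C) ≤ 0 :=
    mul_nonpos_of_nonneg_of_nonpos (sq_nonneg _) h1
  have h3 : t ^ 2 * ((x - 1) ^ 3 - (C * x ^ 3 + A * (x - 1))) ≤ 0 := by nlinarith [I]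
  have htp : (0:ℝ) < t ^ 2 := by nlinarith
  nlinarith [h3, htp]

lemma regmid (C A x : ℝ) (hC : 0 < C) (hA : A < -1) (h0 : 0 ≤ x) (h1 : x ≤ 1) :
    (1 - x) ^ 3 ≤ C * x ^ 3 + A * (x - 1) := by
  nlinarith [mul_nonneg (by linarith : (0:ℝ) ≤ 1 - x) (by nlinarith : (0:ℝ) ≤ 1 - (1-x)^2),
    mul_nonneg (by linarith : (0:ℝ) ≤ 1 - x) (by linarith : (0:ℝ) ≤ -1 - A),
    pow_nonneg h0 3]

lemma reg2 (C s A x : ℝ) (hC1 : 1.3 < C) (hC2 : C < 1.32) (hs1 : 6.19 < s) (hx : x < 0)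
    (I : s ^ 2 * ((1 - C) * (1-x) ^ 3 + 3 * C * (1-x) ^ 2 + (A - 3 * C) * (1-x) + C)
      = ((1-x) - s) ^ 2 * ((1 - C) * s ^ 2 * (1-x) + C)) :
    (1 - x) ^ 3 ≤ C * (-x) ^ 3 + A * (x - 1) := by
  have h1 : (1 - C) * s ^ 2 * (1-x) + C ≤ 0 := by
    nlinarith [mul_nonneg (by nlinarith : (0:ℝ) ≤ (C - 1) * s ^ 2 - C) (by linarith : (0:ℝ) ≤ -x)]
  have h2 : ((1-x) - s) ^ 2 * ((1 - C) * s ^ 2 * (1-x) + C) ≤ 0 :=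
    mul_nonpos_of_nonneg_of_nonpos (sq_nonneg _) h1
  have h3 : s ^ 2 * ((1 - x) ^ 3 - (C * (-x) ^ 3 + A * (x - 1))) ≤ 0 := by nlinarith [I]
  have hsp : (0:ℝ) < s ^ 2 := by nlinarith
  nlinarith [h3, hsp]

lemma key_abstract (r d C t s A : ℝ)
    (hr : r ^ 2 = 7) (hd : d ^ 2 = (68 + 26 * r) / 3)
    (hrl : 2.645 < r) (hru : r < 2.646) (hdl : 6.75 < d) (hdu : d < 6.76)
    (hC : C = (17 + 7 * r) / 27) (ht : t = (d - 3 - r) / 2) (hs : s = (d + 3 + r) / 2)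
    (hA : A = 3 * t ^ 2 - 3 * C * (1 + t) ^ 2) (x : ℝ) :
    |x - 1| ^ 3 ≤ C * |x| ^ 3 + A * (x - 1) := by
  have hC1 : 1.3 < C := by rw [hC]; linarith
  have hC2 : C < 1.32 := by rw [hC]; linarith
  have ht1 : 0.55 < t := by rw [ht]; linarith
  have ht2 : t < 0.56 := by rw [ht]; linarith
  have hs1 : 6.19 < s := by rw [hs]; linarith
  have hs2 : s < 6.21 := by rw [hs]; linarith
  have hAub : A < -8 := by rw [hA]; nlinarith
  have I1 : ∀ w : ℝ, t ^ 2 * ((1 - C) * w ^ 3 - 3 * C * w ^ 2 - (3 * C + A) * w - C)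
      = (w - t) ^ 2 * ((1 - C) * t ^ 2 * w - C) := by
    intro w
    rw [hA, ht, hC]
    linear_combination ( (-3677/324)*w + (-47/36)*w^2 + (-7/3)*r*w + (1/9)*r*w^2 + (569/324)*r^2*w + (7/36)*r^2*w^2 + (7/18)*r^3*w + (19/12)*d*w + (5/54)*d*w^2 + (-23/108)*d*r*w + (-7/108)*d*r*w^2 + (-7/27)*d*r^2*w + (-5/54)*d^2*w + (7/108)*d^2*r*w ) * hd + ( (38269/972)*w + (551/108)*w^2 + (23965/972)*r*w + (107/54)*r*w^2 + (139/36)*r^2*w + (7/108)*r^2*w^2 + (7/108)*r^3*w + (-895/108)*d*w + (-86/81)*d*w^2 + (-1175/324)*d*r*w + (-7/36)*d*r*w^2 + (-7/27)*d*r^2*w ) * hr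
  have I2 : ∀ w : ℝ, s ^ 2 * ((1 - C) * w ^ 3 + 3 * C * w ^ 2 + (A - 3 * C) * w + C)
      = (w - s) ^ 2 * ((1 - C) * s ^ 2 * w + C) := by
    intro w
    rw [hA, ht, hs, hC]
    linear_combination ( (-1235/324)*w + (47/36)*w^2 + (-61/36)*r*w + (-1/9)*r*w^2 + (67/162)*r^2*w + (-7/36)*r^2*w^2 + (7/36)*r^3*w + (-3/4)*d*w + (5/54)*d*w^2 + (-5/54)*d*r*w + (-7/108)*d*r*w^2 + (7/108)*d*r^2*w + (5/108)*d^2*w + (-7/216)*d^2*r*w ) * hd + ( (2656/243)*w + (-551/108)*w^2 + (16337/1944)*r*w + (-107/54)*r*w^2 + (83/54)*r^2*w + (-7/108)*r^2*w^2 + (-7/216)*r^3*w + (313/108)*d*w + (-86/81)*d*w^2 + (101/81)*d*r*w + (-7/36)*d*r*w^2 + (7/108)*d*r^2*w ) * hr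
  rcases le_or_gt 1 x with hx | hx
  · rw [abs_of_nonneg (by linarith : (0:ℝ) ≤ x - 1), abs_of_nonneg (by linarith : (0:ℝ) ≤ x)]
    exact reg1 C t A x hC1 ht1 hx (I1 (x - 1))
  · rcases le_or_gt 0 x with hx0 | hx0
    · rw [abs_of_neg (by linarith : x - 1 < 0), abs_of_nonneg hx0]
      have := regmid C A x (by linarith) (by linarith) hx0 (by linarith)
      calc (-(x-1)) ^ 3 = (1 - x) ^ 3 := by ring
        _ ≤ _ := this
    · rw [abs_of_neg (by linarith : x - 1 < 0), abs_of_neg hx0]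
      have := reg2 C s A x hC1 hC2 hs1 hx0 (I2 (1 - x))
      calc (-(x-1)) ^ 3 = (1 - x) ^ 3 := by ring
        _ ≤ _ := this

open MeasureTheory Real Set

section helpers

lemma sqrt7_lb : 2.645 < Real.sqrt 7 := by
  nlinarith [Real.sq_sqrt (by norm_num : (7:ℝ) ≥ 0), Real.sqrt_nonneg 7]

lemma sqrt7_ub : Real.sqrt 7 < 2.646 := by
  nlinarith [Real.sq_sqrt (by norm_num : (7:ℝ) ≥ 0), Real.sqrt_nonneg 7]

lemma exists_cert : ∃ A : ℝ, ∀ x : ℝ,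
    |x - 1| ^ 3 ≤ (17 + 7 * Real.sqrt 7) / 27 * |x| ^ 3 + A * (x - 1) := by
  set r := Real.sqrt 7 with hrdef
  have hr : r ^ 2 = 7 := Real.sq_sqrt (by norm_num)
  have hrl : 2.645 < r := sqrt7_lb
  have hru : r < 2.646 := sqrt7_ub
  set d := Real.sqrt ((68 + 26 * r) / 3) with hddef
  have hd : d ^ 2 = (68 + 26 * r) / 3 := Real.sq_sqrt (by positivity)
  have hd0 : 0 ≤ d := Real.sqrt_nonneg _
  have hdl : 6.75 < d := by nlinarith
  have hdu : d < 6.76 := by nlinarith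
  exact ⟨_, fun x => key_abstract r d _ _ _ _ hr hd hrl hru hdl hdu rfl rfl rfl rfl x⟩

lemma key_scaled (C A : ℝ) (hC1 : 1 ≤ C)
    (hkey : ∀ x : ℝ, |x - 1| ^ 3 ≤ C * |x| ^ 3 + A * (x - 1)) (m x : ℝ) :
    |x - m| ^ 3 ≤ C * |x| ^ 3 + (A * m * |m|) * (x - m) := by
  rcases eq_or_ne m 0 with rfl | hm
  · simp only [sub_zero, mul_zero, zero_mul]
    nlinarith [pow_nonneg (abs_nonneg x) 3]
  · have h := hkey (x / m)
    have h1 : |x / m - 1| * |m| = |x - m| := by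
      rw [← abs_mul]; congr 1; field_simp
    have h2 : |x / m| * |m| = |x| := by
      rw [← abs_mul, div_mul_cancel₀ _ hm]
    have hm3 : (0:ℝ) ≤ |m| ^ 3 := by positivity
    have e : (x / m - 1) * m ^ 2 = (x - m) * m := by field_simp
    calc |x - m| ^ 3 = (|x / m - 1| * |m|) ^ 3 := by rw [h1]
      _ = |x / m - 1| ^ 3 * |m| ^ 3 := by ring
      _ ≤ (C * |x / m| ^ 3 + A * (x / m - 1)) * |m| ^ 3 :=
          mul_le_mul_of_nonneg_right h hm3
      _ = C * (|x / m| * |m|) ^ 3 + A * (x / m - 1) * |m| ^ 3 := by ring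
      _ = C * |x| ^ 3 + (A * m * |m|) * (x - m) := by
          rw [h2]
          congr 1
          calc A * (x / m - 1) * |m| ^ 3 = A * ((x / m - 1) * m ^ 2) * |m| := by
                rw [pow_succ, sq_abs]; ring
            _ = A * ((x - m) * m) * |m| := by rw [e]
            _ = (A * m * |m|) * (x - m) := by ring

end helpers

theorem stmt13 {Ω : Type*} [MeasurableSpace Ω] (μ : Measure Ω) [IsProbabilityMeasure μ]
    (X : Ω → ℝ) (hX : AEMeasurable X μ)
    (hX3 : Integrable (fun ω => |X ω| ^ 3) μ) :
    ∫ ω, |X ω - ∫ x, X x ∂μ| ^ 3 ∂μ ≤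
      (17 + 7 * Real.sqrt 7) / 27 * ∫ ω, |X ω| ^ 3 ∂μ := by
  obtain ⟨A, hkey⟩ := exists_cert
  set C : ℝ := (17 + 7 * Real.sqrt 7) / 27 with hCdef
  have hC1 : (1:ℝ) ≤ C := by
    have := sqrt7_lb
    rw [hCdef]; linarith
  set m : ℝ := ∫ x, X x ∂μ with hmdef
  have hXas : AEStronglyMeasurable X μ := hX.aestronglyMeasurable
  have hX1 : Integrable X μ := by
    refine Integrable.mono' ((integrable_const (1:ℝ)).add hX3) hXas
      (Filter.Eventually.of_forall fun ω => ?_)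
    simp only [Real.norm_eq_abs, Pi.add_apply]
    nlinarith [abs_nonneg (X ω), mul_nonneg (abs_nonneg (X ω)) (sq_nonneg (|X ω| - 1)),
      sq_nonneg (|X ω| - 1)]
  have hpt : ∀ ω, |X ω - m| ^ 3 ≤ C * |X ω| ^ 3 + (A * m * |m|) * (X ω - m) :=
    fun ω => key_scaled C A hC1 hkey m (X ω)
  have hL : Integrable (fun ω => |X ω - m| ^ 3) μ := by
    have hmeas : AEMeasurable (fun ω => |X ω - m| ^ 3) μ :=
      (measurable_abs.comp_aemeasurable (hX.sub aemeasurable_const)).pow_const 3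
    refine Integrable.mono' ((hX3.const_mul 4).add (integrable_const (4 * |m| ^ 3)))
      hmeas.aestronglyMeasurable (Filter.Eventually.of_forall fun ω => ?_)
    simp only [Real.norm_eq_abs, Pi.add_apply]
    have htri : |X ω - m| ≤ |X ω| + |m| := by
      rw [sub_eq_add_neg]
      exact (abs_add_le _ _).trans (by rw [abs_neg])
    have h3 : |X ω - m| ^ 3 ≤ (|X ω| + |m|) ^ 3 :=
      pow_le_pow_left₀ (abs_nonneg _) htri 3
    have habs : |(|X ω - m| ^ 3)| = |X ω - m| ^ 3 := abs_of_nonneg (by positivity)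
    rw [habs]
    nlinarith [h3, mul_nonneg (add_nonneg (abs_nonneg (X ω)) (abs_nonneg m))
      (sq_nonneg (|X ω| - |m|))]
  have hR : Integrable (fun ω => C * |X ω| ^ 3 + (A * m * |m|) * (X ω - m)) μ :=
    (hX3.const_mul C).add ((hX1.sub (integrable_const m)).const_mul _)
  calc ∫ ω, |X ω - m| ^ 3 ∂μ
      ≤ ∫ ω, (C * |X ω| ^ 3 + (A * m * |m|) * (X ω - m)) ∂μ := integral_mono hL hR hpt
    _ = C * ∫ ω, |X ω| ^ 3 ∂μ + (A * m * |m|) * ((∫ ω, X ω ∂μ) - m) := by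
        have hIa : Integrable (fun ω => C * |X ω| ^ 3) μ := hX3.const_mul C
        have hIb : Integrable (fun ω => (A * m * |m|) * (X ω - m)) μ :=
          (hX1.sub (integrable_const m)).const_mul _
        have hIc : Integrable (fun ω => X ω - m) μ := hX1.sub (integrable_const m)
        rw [integral_add hIa hIb, integral_const_mul, integral_const_mul,
          integral_sub hX1 (integrable_const m), integral_const]
        simp [measure_univ]
    _ = C * ∫ ω, |X ω| ^ 3 ∂μ := by
        rw [← hmdef, sub_self, mul_zero, add_zero]
end

section
/- sup_{b∈[0,1]} R(3,b) = (17 + 7√7)/27, attained at b_3 = 1/2 − (1/6)√(1 + 2√7), where R(3,b) = (b² + (1−b)²)·(√b + √(1−b))². -/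
open Real Set

theorem stmt14 :
    IsGreatest
      ((fun b : ℝ => (b ^ 2 + (1 - b) ^ 2) * (Real.sqrt b + Real.sqrt (1 - b)) ^ 2) ''
        Set.Icc (0:ℝ) 1)
      ((17 + 7 * Real.sqrt 7) / 27) ∧
    (1 / 2 - Real.sqrt (1 + 2 * Real.sqrt 7) / 6) ∈ Set.Icc (0:ℝ) 1 ∧
    ((1 / 2 - Real.sqrt (1 + 2 * Real.sqrt 7) / 6 : ℝ) ^ 2 +
        (1 - (1 / 2 - Real.sqrt (1 + 2 * Real.sqrt 7) / 6)) ^ 2) *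
      (Real.sqrt (1 / 2 - Real.sqrt (1 + 2 * Real.sqrt 7) / 6) +
        Real.sqrt (1 - (1 / 2 - Real.sqrt (1 + 2 * Real.sqrt 7) / 6))) ^ 2 =
      (17 + 7 * Real.sqrt 7) / 27 := by
  have h7 : Real.sqrt 7 ^ 2 = 7 := Real.sq_sqrt (by norm_num)
  have h70 : 0 ≤ Real.sqrt 7 := Real.sqrt_nonneg 7
  have h7l : 2 ≤ Real.sqrt 7 := by nlinarith
  have h7u : Real.sqrt 7 ≤ 3 := by nlinarith
  set s := Real.sqrt (1 + 2 * Real.sqrt 7) with hs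
  have hs0 : 0 ≤ s := Real.sqrt_nonneg _
  have hs2 : s ^ 2 = 1 + 2 * Real.sqrt 7 := Real.sq_sqrt (by linarith)
  have hs3 : s ≤ 3 := by nlinarith
  have hb0 : (0:ℝ) ≤ 1 / 2 - s / 6 := by linarith
  have hc0 : (0:ℝ) ≤ 1 - (1 / 2 - s / 6) := by linarith
  have hmem : (1 / 2 - s / 6) ∈ Set.Icc (0:ℝ) 1 := ⟨hb0, by linarith⟩
  have hbc : (1 / 2 - s / 6) * (1 - (1 / 2 - s / 6)) = ((Real.sqrt 7 - 1) / 6) ^ 2 := by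
    linear_combination (-(1:ℝ)/36) * hs2 - (1/36 : ℝ) * h7
  have hprod : Real.sqrt (1 / 2 - s / 6) * Real.sqrt (1 - (1 / 2 - s / 6))
      = (Real.sqrt 7 - 1) / 6 := by
    rw [← Real.sqrt_mul hb0, hbc, Real.sqrt_sq (by linarith)]
  have hb2 : Real.sqrt (1 / 2 - s / 6) ^ 2 = 1 / 2 - s / 6 := Real.sq_sqrt hb0
  have hc2 : Real.sqrt (1 - (1 / 2 - s / 6)) ^ 2 = 1 - (1 / 2 - s / 6) := Real.sq_sqrt hc0
  have hsum : (Real.sqrt (1 / 2 - s / 6) + Real.sqrt (1 - (1 / 2 - s / 6))) ^ 2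
      = (2 + Real.sqrt 7) / 3 := by
    linear_combination hb2 + hc2 + 2 * hprod
  have hP : ((1 / 2 - s / 6 : ℝ)) ^ 2 + (1 - (1 / 2 - s / 6)) ^ 2 = (5 + Real.sqrt 7) / 9 := by
    linear_combination (1/18 : ℝ) * hs2
  have key : ((1 / 2 - s / 6 : ℝ) ^ 2 + (1 - (1 / 2 - s / 6)) ^ 2) *
      (Real.sqrt (1 / 2 - s / 6) + Real.sqrt (1 - (1 / 2 - s / 6))) ^ 2 =
      (17 + 7 * Real.sqrt 7) / 27 := by
    rw [hP, hsum]
    linear_combination (1/27 : ℝ) * h7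
  refine ⟨⟨⟨1 / 2 - s / 6, hmem, key⟩, ?_⟩, hmem, key⟩
  rintro y ⟨b, ⟨hb0', hb1⟩, rfl⟩
  simp only
  have hub : Real.sqrt b ^ 2 = b := Real.sq_sqrt hb0'
  have hvb : Real.sqrt (1 - b) ^ 2 = 1 - b := Real.sq_sqrt (by linarith)
  set t := Real.sqrt b * Real.sqrt (1 - b) with ht
  have ht0 : 0 ≤ t := mul_nonneg (Real.sqrt_nonneg _) (Real.sqrt_nonneg _)
  have ht2 : t ^ 2 = b * (1 - b) := by rw [ht, mul_pow, hub, hvb]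
  have hexp : (Real.sqrt b + Real.sqrt (1 - b)) ^ 2 = 1 + 2 * t := by
    rw [ht]; linear_combination hub + hvb
  have hQ : b ^ 2 + (1 - b) ^ 2 = 1 - 2 * t ^ 2 := by
    rw [ht2]; ring
  rw [hexp, hQ]
  have hH : 0 ≤ 4 * ((t - (Real.sqrt 7 - 1) / 6) ^ 2 * (t + (1 + 2 * Real.sqrt 7) / 6)) := by
    have := mul_nonneg (sq_nonneg (t - (Real.sqrt 7 - 1) / 6))
      (show (0:ℝ) ≤ t + (1 + 2 * Real.sqrt 7) / 6 by linarith)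
    linarith
  have hid : (17 + 7 * Real.sqrt 7) / 27 - (1 - 2 * t ^ 2) * (1 + 2 * t)
      = 4 * ((t - (Real.sqrt 7 - 1) / 6) ^ 2 * (t + (1 + 2 * Real.sqrt 7) / 6)) := by
    linear_combination (t / 3 - (2 * Real.sqrt 7 - 3) / 54) * h7
  linarith
end

section
/- For each p ∈ (1,∞) with p ≠ 2, there exists b_p ∈ (0,1/2) such that b ↦ R(p,b) is strictly increasing on [0,b_p] and strictly decreasing on [b_p,1/2]; consequently b_p is the unique maximizer of R(p,·) over [0,1/2]. -/
open Real Set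

namespace S15

open Topology Filter

lemma continuous_tanh : Continuous Real.tanh := by
  have : Real.tanh = fun x => Real.sinh x / Real.cosh x := by
    funext x; exact Real.tanh_eq_sinh_div_cosh x
  rw [this]
  exact Real.continuous_sinh.div Real.continuous_cosh (fun x => (Real.cosh_pos x).ne')

lemma hasDerivAt_tanh (x : ℝ) : HasDerivAt Real.tanh (1 - Real.tanh x ^ 2) x := by
  have h : HasDerivAt (fun y => Real.sinh y / Real.cosh y)
      ((Real.cosh x * Real.cosh x - Real.sinh x * Real.sinh x) / Real.cosh x ^ 2) x :=
    (Real.hasDerivAt_sinh x).div (Real.hasDerivAt_cosh x) (Real.cosh_pos x).ne'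
  have e1 : (fun y => Real.sinh y / Real.cosh y) = Real.tanh := by
    funext y; exact (Real.tanh_eq_sinh_div_cosh y).symm
  have e2 : (Real.cosh x * Real.cosh x - Real.sinh x * Real.sinh x) / Real.cosh x ^ 2
      = 1 - Real.tanh x ^ 2 := by
    have hc := (Real.cosh_pos x).ne'
    have hs := Real.cosh_sq_sub_sinh_sq x
    rw [Real.tanh_eq_sinh_div_cosh, div_pow]
    field_simp
  rw [e1, e2] at h
  exact h

lemma tanh_exp (y : ℝ) : Real.tanh y = (Real.exp (2*y) - 1) / (Real.exp (2*y) + 1) := by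
  rw [Real.tanh_eq_sinh_div_cosh, Real.sinh_eq, Real.cosh_eq]
  have h1 : Real.exp (2*y) = Real.exp y * Real.exp y := by
    rw [← Real.exp_add]; ring_nf
  have h2 : Real.exp y ≠ 0 := (Real.exp_pos y).ne'
  have h3 : Real.exp (2*y) + 1 > 0 := by positivity
  rw [h1]
  field_simp
  have h4 : Real.exp (-y) = (Real.exp y)⁻¹ := Real.exp_neg y
  rw [h4]
  field_simp


-- g(z) = (r*z + r - 1 - z^r)/(z+1) is strictly decreasing on [1, ∞)
lemma g_strictAnti (r : ℝ) (hr : 1 < r) :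
    StrictAntiOn (fun z : ℝ => (r*z + r - 1 - z^r)/(z+1)) (Ici 1) := by
  have hcont : ContinuousOn (fun z : ℝ => (r*z + r - 1 - z^r)/(z+1)) (Ici 1) := by
    apply ContinuousOn.div
    · apply ContinuousOn.sub
      · fun_prop
      · intro z hz
        exact (Real.continuousAt_rpow_const z r (Or.inl (by simp at hz; linarith))).continuousWithinAt
    · fun_prop
    · intro z hz; simp at hz; positivity
  apply strictAntiOn_of_deriv_neg (convex_Ici 1) hcont
  intro z hz
  rw [interior_Ici] at hz
  have hz1 : (1:ℝ) < z := hz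
  have hz0 : (0:ℝ) < z := by linarith
  have hd : HasDerivAt (fun z : ℝ => (r*z + r - 1 - z^r)/(z+1))
      (((r - r * z^(r-1)) * (z+1) - (r*z + r - 1 - z^r) * 1) / (z+1)^2) z := by
    apply HasDerivAt.div
    · have h1 : HasDerivAt (fun z : ℝ => z ^ r) (r * z^(r-1)) z := by
        have := Real.hasDerivAt_rpow_const (x := z) (p := r) (Or.inl hz0.ne')
        simpa [mul_comm] using this
      have h2 : HasDerivAt (fun z : ℝ => r*z + (r-1)) r z := by
        simpa using ((hasDerivAt_id z).const_mul r).add_const (r - 1)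
      have e : (fun z : ℝ => r*z + r - 1 - z^r) = fun z : ℝ => (r*z + (r-1)) - z^r := by
        funext z; ring
      rw [e]
      exact h2.sub h1
    · simpa using (hasDerivAt_id z).add_const 1
    · positivity
  rw [hd.deriv]
  apply div_neg_of_neg_of_pos
  · have hzr : 1 ≤ z ^ (r-1) := Real.one_le_rpow hz1.le (by linarith)
    have hzrr : z ^ r = z ^ (r-1) * z := by
      have e : r = (r-1) + 1 := by ring
      conv_lhs => rw [e]
      rw [Real.rpow_add_one hz0.ne' (r-1)]
    have hzr' : 1 < z ^ (r-1) :=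
      (Real.one_lt_rpow_iff_of_pos hz0).mpr (Or.inl ⟨hz1, by linarith⟩)
    have h6 : z < z^(r-1) * z := by nlinarith [hzr', hz1]
    nlinarith [hzr, hzrr, h6, hz1]
  · positivity


lemma key (r E : ℝ) (hr : 1 < r) (hE : 1 < E)
    (hc : r/(E^r+1) + 1/(E^(1/r)+1) = (r+1)/(E+1)) :
    r * E^(1/r) + r - 1 < E := by
  have hr0 : (0:ℝ) < r := by linarith
  have hE0 : (0:ℝ) < E := by linarith
  set t := E^(1/r) with htdef
  have ht1 : 1 < t := (Real.one_lt_rpow_iff_of_pos hE0).mpr (Or.inl ⟨hE, by positivity⟩)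
  have htX : t ^ r = E := by
    rw [htdef, ← Real.rpow_mul hE0.le, one_div_mul_cancel hr0.ne', Real.rpow_one]
  have hP1 : 1 < E^r := (Real.one_lt_rpow_iff_of_pos hE0).mpr (Or.inl ⟨hE, hr0⟩)
  set P := E^r with hPdef
  -- cleared constraint
  have hm : r*(t+1)*(E+1) + (P+1)*(E+1) = (r+1)*(P+1)*(t+1) := by
    have d1 : P + 1 ≠ 0 := by positivity
    have d2 : t + 1 ≠ 0 := by positivity
    have d3 : E + 1 ≠ 0 := by positivity
    field_simp at hc
    linarith [hc]
  -- the identity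
  have hid : (t+1)*(r*E + r - 1 - P) = (r*t + r - 1 - E)*(P+1) := by
    linear_combination hm
  -- conclude
  by_contra hcon
  push_neg at hcon
  have hht : 0 ≤ r*t + r - 1 - E := by linarith
  have htE : t < E := by
    calc t = t ^ (1:ℝ) := (Real.rpow_one t).symm
    _ < t ^ r := Real.rpow_lt_rpow_of_exponent_lt ht1 hr
    _ = E := htX
  have hXP : E ≤ P := by
    calc E = E ^ (1:ℝ) := (Real.rpow_one E).symm
    _ ≤ E ^ r := Real.rpow_le_rpow_of_exponent_le hE.le hr.le
  have hg := g_strictAnti r hr (mem_Ici.mpr ht1.le) (mem_Ici.mpr (by linarith : (1:ℝ) ≤ E)) htE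
  simp only at hg
  -- hg : (r*E + r - 1 - E^r)/(E+1) < (r*t + r - 1 - t^r)/(t+1)
  rw [htX] at hg
  have hg' : (r*E + r - 1 - P)*(t+1) < (r*t + r - 1 - E)*(E+1) := by
    have d3 : (0:ℝ) < E + 1 := by positivity
    have d2 : (0:ℝ) < t + 1 := by positivity
    rw [div_lt_div_iff₀ d3 d2] at hg
    linarith [hg]
  nlinarith [hid, hg', hht, hXP, hP1]


noncomputable def Af (r y : ℝ) : ℝ :=
  r * Real.tanh (r*y) + Real.tanh (y/r) - (r+1) * Real.tanh y

noncomputable def Af' (r y : ℝ) : ℝ :=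
  r^2 * (1 - Real.tanh (r*y)^2) + (1/r) * (1 - Real.tanh (y/r)^2) - (r+1) * (1 - Real.tanh y^2)

lemma hasDerivAt_Af (r y : ℝ) (hr : r ≠ 0) : HasDerivAt (Af r) (Af' r y) y := by
  have h1 : HasDerivAt (fun y => Real.tanh (r*y)) ((1 - Real.tanh (r*y)^2) * r) y :=
    (hasDerivAt_tanh (r*y)).comp y (by simpa using (hasDerivAt_id y).const_mul r)
  have h2 : HasDerivAt (fun y => Real.tanh (y/r)) ((1 - Real.tanh (y/r)^2) * (1/r)) y := by
    have : HasDerivAt (fun y : ℝ => y/r) (1/r) y := by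
      simpa using (hasDerivAt_id y).div_const r
    exact (hasDerivAt_tanh (y/r)).comp y this
  have h3 : HasDerivAt (fun y => Real.tanh y) (1 - Real.tanh y^2) y := hasDerivAt_tanh y
  have := ((h1.const_mul r).add h2).sub (h3.const_mul (r+1))
  refine HasDerivAt.congr_deriv this ?_
  unfold Af'
  ring

-- E-form of Af
lemma Af_exp (r y : ℝ) (hr : 0 < r) :
    Af r y = 2*((r+1)/(Real.exp (2*y)+1) - r/((Real.exp (2*y))^r+1)
      - 1/((Real.exp (2*y))^(1/r)+1)) := by
  have e1 : (Real.exp (2*y))^r = Real.exp (2*(r*y)) := by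
    rw [← Real.exp_mul]; ring_nf
  have e2 : (Real.exp (2*y))^(1/r) = Real.exp (2*(y/r)) := by
    rw [← Real.exp_mul]; field_simp
  unfold Af
  rw [tanh_exp (r*y), tanh_exp (y/r), tanh_exp y, e1, e2]
  have p1 : Real.exp (2*(r*y)) + 1 > 0 := by positivity
  have p2 : Real.exp (2*(y/r)) + 1 > 0 := by positivity
  have p3 : Real.exp (2*y) + 1 > 0 := by positivity
  field_simp
  ring


lemma one_sub_tanh (z : ℝ) : 1 - Real.tanh z = 2/(Real.exp (2*z) + 1) := by
  rw [tanh_exp z]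
  have : Real.exp (2*z) + 1 > 0 := by positivity
  field_simp
  norm_num

set_option maxHeartbeats 1000000 in
lemma Af'_neg_alg (r E α β τ : ℝ) (hr : 1 < r) (hE : 1 < E)
    (hc : r/(E^r+1) + 1/(E^(1/r)+1) = (r+1)/(E+1))
    (hea : 1 - α = 2/(E^r+1)) (heb : 1 - β = 2/(E^(1/r)+1))
    (hτ : (r+1)*τ = r*α + β) :
    r^2*(1-α^2) + (1/r)*(1-β^2) - (r+1)*(1-τ^2) < 0 := by
  have hr0 : (0:ℝ) < r := by linarith
  have hE0 : (0:ℝ) < E := by linarith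
  have hP : (0:ℝ) < E^r + 1 := by positivity
  have hQ : (0:ℝ) < E^(1/r) + 1 := by positivity
  have hD : (0:ℝ) < E + 1 := by positivity
  have hkey := key r E hr hE hc
  set Q := E^(1/r) + 1 with hQdef
  set P := E^r + 1 with hPdef
  set D := E + 1 with hDdef
  have h5 : r*Q < D := by rw [hQdef, hDdef]; linarith [hkey]
  have hm : r*Q*D + P*D = (r+1)*P*Q := by
    rw [div_add_div _ _ hP.ne' hQ.ne', div_eq_div_iff (by positivity) hD.ne'] at hc
    linear_combination hc
  have e8 : P*((r+1)*Q - D) = r*Q*D := by linear_combination -hm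
  have e8' : 0 < P*((r+1)*Q - D) := by rw [e8]; positivity
  have e9 : 0 < (r+1)*Q - D := by nlinarith [e8', hP]
  have hA : 0 < r*Q*(D - r*Q) := mul_pos (by positivity) (by linarith)
  have h10 : r^2*Q*((r+1)*Q - D) < r*Q*D := by
    nlinarith [mul_pos (by linarith : (0:ℝ) < r+1) hA]
  have hgoal : r^2*Q < P := by nlinarith [h10, e8, e9]
  have hαβ : r^2 - 1 < r^2*α - β := by
    have hq1 : r^2*(1-α) < 1 - β := by
      rw [hea, heb]
      have e3 : r^2*(2/P) = (2*r^2)/P := by ring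
      rw [e3, div_lt_div_iff₀ hP hQ]
      linarith [hgoal, hQ]
    nlinarith [hq1]
  have ew : r * (r^2*(1-α^2) + (1/r)*(1-β^2) - (r+1)*(1-τ^2))
      = r^3*(1-α^2) + (1-β^2) - r*(r+1)*(1-τ^2) := by
    field_simp
  have hid : (r+1) * (r * (r^2*(1-α^2) + (1/r)*(1-β^2) - (r+1)*(1-τ^2)))
      = (r^2-1)^2 - (r^2*α - β)^2 := by
    rw [ew]
    linear_combination (r*((r+1)*τ + (r*α+β))) * hτ
  have ha1 : 0 < r^2 - 1 := by nlinarith [hr]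
  have hba : 0 < (r^2*α - β) + (r^2 - 1) := by linarith
  have hsq : (r^2-1)^2 < (r^2*α - β)^2 := by nlinarith [hαβ, hba]
  have hneg : (r+1) * (r * (r^2*(1-α^2) + (1/r)*(1-β^2) - (r+1)*(1-τ^2))) < 0 := by
    rw [hid]; linarith [hsq]
  by_contra hcon
  push_neg at hcon
  have : 0 ≤ (r+1) * (r * (r^2*(1-α^2) + (1/r)*(1-β^2) - (r+1)*(1-τ^2))) :=
    mul_nonneg (by linarith) (mul_nonneg hr0.le hcon)
  linarith [hneg]

lemma Af'_neg (r y : ℝ) (hr : 1 < r) (hy : 0 < y) (h0 : Af r y = 0) : Af' r y < 0 := by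
  have hr0 : (0:ℝ) < r := by linarith
  have hE : 1 < Real.exp (2*y) := by
    calc (1:ℝ) = Real.exp 0 := Real.exp_zero.symm
    _ < Real.exp (2*y) := Real.exp_lt_exp.mpr (by linarith)
  have hc : r/((Real.exp (2*y))^r+1) + 1/((Real.exp (2*y))^(1/r)+1)
      = (r+1)/(Real.exp (2*y)+1) := by
    have h1 := Af_exp r y hr0
    rw [h0] at h1
    linarith [h1]
  have e1 : (Real.exp (2*y))^r = Real.exp (2*(r*y)) := by
    rw [← Real.exp_mul]; congr 1; ring
  have e2 : (Real.exp (2*y))^(1/r) = Real.exp (2*(y/r)) := by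
    rw [← Real.exp_mul]; congr 1; field_simp
  have hea : 1 - Real.tanh (r*y) = 2/((Real.exp (2*y))^r+1) := by
    rw [e1]; exact one_sub_tanh (r*y)
  have heb : 1 - Real.tanh (y/r) = 2/((Real.exp (2*y))^(1/r)+1) := by
    rw [e2]; exact one_sub_tanh (y/r)
  have hτ : (r+1)*Real.tanh y = r*Real.tanh (r*y) + Real.tanh (y/r) := by
    have h2 : r * Real.tanh (r*y) + Real.tanh (y/r) - (r+1) * Real.tanh y = 0 := h0
    linarith [h2]
  exact Af'_neg_alg r (Real.exp (2*y)) (Real.tanh (r*y)) (Real.tanh (y/r)) (Real.tanh y)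
    hr hE hc hea heb hτ


lemma continuous_Af (r : ℝ) : Continuous (Af r) := by
  unfold Af
  have h1 : Continuous fun y : ℝ => Real.tanh (r*y) :=
    continuous_tanh.comp (continuous_const.mul continuous_id)
  have h2 : Continuous fun y : ℝ => Real.tanh (y/r) :=
    continuous_tanh.comp (continuous_id.div_const r)
  exact (((continuous_const.mul h1)).add h2).sub (continuous_const.mul continuous_tanh)

lemma Af_zero (r : ℝ) : Af r 0 = 0 := by
  unfold Af
  simp [Real.tanh_zero]

lemma Af_pos_near (r : ℝ) (hr : 1 < r) : ∃ δ > 0, ∀ y, 0 < y → y < δ → 0 < Af r y := by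
  have hr0 : (0:ℝ) < r := by linarith
  have hd : HasDerivAt (Af r) (Af' r 0) 0 := hasDerivAt_Af r 0 hr0.ne'
  have ha0 : 0 < Af' r 0 := by
    unfold Af'
    simp only [mul_zero, zero_div, zero_mul, Real.tanh_zero]
    have h0 : 0 < (r-1)*(r^2-1) := mul_pos (by linarith) (by nlinarith)
    have h1 : 0 < r^3 - r^2 - r + 1 := by nlinarith [h0]
    rw [div_eq_mul_inv]
    have : r^2 * (1 - 0^2) + 1 * r⁻¹ * (1 - 0^2) - (r+1) * (1 - 0^2)
        = (r^3 - r^2 - r + 1) / r := by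
      field_simp
      ring
    rw [this]
    positivity
  have hs := hasDerivAt_iff_tendsto_slope.mp hd
  have hev : ∀ᶠ z in 𝓝[≠] (0:ℝ), 0 < slope (Af r) 0 z :=
    hs.eventually (lt_mem_nhds ha0)
  have hev2 : ∀ᶠ z in 𝓝[>] (0:ℝ), 0 < slope (Af r) 0 z :=
    hev.filter_mono (nhdsWithin_mono 0 (fun x hx => ne_of_gt hx))
  rcases (nhdsGT_basis (0:ℝ)).eventually_iff.mp hev2 with ⟨δ, hδ0, hδ⟩
  refine ⟨δ, hδ0, fun y hy1 hy2 => ?_⟩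
  have := hδ ⟨hy1, hy2⟩
  rw [slope_def_field, Af_zero, sub_zero, sub_zero] at this
  have := mul_pos this hy1
  rwa [div_mul_cancel₀ _ hy1.ne'] at this

lemma Af_neg_far (r : ℝ) (hr : 1 < r) : ∃ Y, 0 < Y ∧ Af r Y < 0 := by
  have hr0 : (0:ℝ) < r := by linarith
  set c := 2*(r+1) with hc
  have hc1 : (1:ℝ) < c := by rw [hc]; linarith
  set E := max c (c ^ (r/(r-1))) with hE
  have hEc : c ≤ E := le_max_left _ _
  have hE1 : (1:ℝ) < E := lt_of_lt_of_le hc1 hEc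
  have hE0 : (0:ℝ) < E := by linarith
  have hE2 : c ≤ E ^ ((r-1)/r) := by
    have h2 : c ^ (r/(r-1)) ≤ E := le_max_right _ _
    have h3 : (c ^ (r/(r-1))) ^ ((r-1)/r) ≤ E ^ ((r-1)/r) :=
      Real.rpow_le_rpow (by positivity) h2 (div_nonneg (by linarith) (by linarith))
    calc c = c ^ ((r/(r-1)) * ((r-1)/r)) := by
            rw [mul_comm, div_mul_div_comm]
            rw [mul_comm (r-1) r, div_self (ne_of_gt (by nlinarith : (0:ℝ) < r*(r-1))), Real.rpow_one]
    _ = (c ^ (r/(r-1))) ^ ((r-1)/r) := Real.rpow_mul (by positivity) _ _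
    _ ≤ E ^ ((r-1)/r) := h3
  -- key bound : (r+1)*(E^(1/r)+1) < E + 1
  have hsplit : E ^ (1/r) * E ^ ((r-1)/r) = E := by
    rw [← Real.rpow_add hE0]
    field_simp
    rw [add_sub_cancel, div_self hr0.ne', Real.rpow_one]
  have hs0 : (0:ℝ) < E ^ (1/r) := by positivity
  have hbound : c * E ^ (1/r) ≤ E := by
    calc c * E ^ (1/r) ≤ E ^ ((r-1)/r) * E ^ (1/r) := by
          apply mul_le_mul_of_nonneg_right hE2 hs0.le
    _ = E := by rw [mul_comm]; exact hsplit
  have hkey : (r+1)*(E ^ (1/r)+1) < E + 1 := by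
    have h4 : (1:ℝ) ≤ E ^ (1/r) := Real.one_le_rpow hE1.le (div_nonneg zero_le_one hr0.le)
    have h5 : c * 1 ≤ c * E ^ (1/r) := by nlinarith [h4, hc1]
    rw [hc] at hbound h5
    nlinarith [hbound, h5]
  have hlogE : 0 < Real.log E := Real.log_pos hE1
  refine ⟨Real.log E / 2, by linarith, ?_⟩
  have hexp : Real.exp (2 * (Real.log E / 2)) = E := by
    rw [show 2 * (Real.log E / 2) = Real.log E by ring, Real.exp_log hE0]
  rw [Af_exp r _ hr0, hexp]
  have p1 : (0:ℝ) < E + 1 := by linarith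
  have p2 : (0:ℝ) < E^r + 1 := by positivity
  have p3 : (0:ℝ) < E^(1/r) + 1 := by positivity
  have h6 : (r+1)/(E+1) < 1/(E^(1/r)+1) := by
    rw [div_lt_div_iff₀ p1 p3]
    nlinarith [hkey]
  have h7 : 0 < r/(E^r+1) := by positivity
  nlinarith [h6, h7]


/-- Just to the right of a zero with negative derivative, Af is negative (on a window). -/
lemma Af_neg_right_of_zero (r z : ℝ) (hr : 1 < r) (hz : 0 < z) (h0 : Af r z = 0) :
    ∃ ε > 0, ∀ u, z < u → u < z + ε → Af r u < 0 := by
  have hd : HasDerivAt (Af r) (Af' r z) z := hasDerivAt_Af r z (by linarith)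
  have hneg : Af' r z < 0 := Af'_neg r z hr hz h0
  have hs := hasDerivAt_iff_tendsto_slope.mp hd
  have hev : ∀ᶠ u in 𝓝[≠] z, slope (Af r) z u < 0 :=
    hs.eventually (gt_mem_nhds hneg)
  have hev2 : ∀ᶠ u in 𝓝[>] z, slope (Af r) z u < 0 :=
    hev.filter_mono (nhdsWithin_mono z (fun x hx => ne_of_gt hx))
  rcases (nhdsGT_basis z).eventually_iff.mp hev2 with ⟨w, hw, hful⟩
  refine ⟨w - z, by linarith, fun u hu1 hu2 => ?_⟩
  have h3 := hful ⟨hu1, by linarith⟩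
  rw [slope_def_field, h0, sub_zero] at h3
  have h4 : 0 < u - z := by linarith
  have := mul_neg_of_neg_of_pos h3 h4
  rwa [div_mul_cancel₀ _ h4.ne'] at this

/-- At a zero approached from the left by negative values, the derivative is ≥ 0. -/
lemma deriv_nonneg_left (r z w : ℝ) (hr : 1 < r) (hwz : w < z)
    (hneg : ∀ u, w ≤ u → u < z → Af r u < 0) (h0 : Af r z = 0) : 0 ≤ Af' r z := by
  have hd : HasDerivAt (Af r) (Af' r z) z := hasDerivAt_Af r z (by linarith)
  have hs := hasDerivAt_iff_tendsto_slope.mp hd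
  have hs2 : Tendsto (slope (Af r) z) (𝓝[<] z) (𝓝 (Af' r z)) :=
    hs.mono_left (nhdsWithin_mono z (fun x hx => ne_of_lt hx))
  apply ge_of_tendsto hs2
  filter_upwards [Ioo_mem_nhdsLT_of_mem (show z ∈ Ioc w z from ⟨hwz, le_refl z⟩)]
  intro u hu
  rw [slope_def_field, h0, sub_zero]
  have h5 : Af r u < 0 := hneg u hu.1.le hu.2
  have h6 : u - z < 0 := by linarith [hu.2]
  exact (div_pos_of_neg_of_neg h5 h6).le

lemma exists_ystar (r : ℝ) (hr : 1 < r) : ∃ ys, 0 < ys ∧ Af r ys = 0 ∧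
    (∀ y, 0 < y → y < ys → 0 < Af r y) ∧ (∀ y, ys < y → Af r y < 0) := by
  obtain ⟨δ, hδ0, hδpos⟩ := Af_pos_near r hr
  obtain ⟨Y, hY0, hYneg⟩ := Af_neg_far r hr
  -- any positive zero is ≥ δ
  have hzge : ∀ z, 0 < z → Af r z = 0 → δ ≤ z := by
    intro z hz h0
    by_contra hlt
    push_neg at hlt
    exact absurd h0 (ne_of_gt (hδpos z hz hlt))
  -- a zero exists in [a, Y]
  have hIVT : ∀ b, 0 < b → Af r b < 0 → ∃ c, 0 < c ∧ c ≤ b ∧ Af r c = 0 := by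
    intro b hb hbneg
    set a := min (δ/2) (b/2) with ha
    have ha0 : 0 < a := by apply lt_min <;> linarith
    have hab : a ≤ b := by
      calc a ≤ b/2 := min_le_right _ _
      _ ≤ b := by linarith
    have hapos : 0 < Af r a := hδpos a ha0 (by
      calc a ≤ δ/2 := min_le_left _ _
      _ < δ := by linarith)
    have hsub := intermediate_value_Icc' hab (continuous_Af r).continuousOn
    have h0mem : (0:ℝ) ∈ Icc (Af r b) (Af r a) := ⟨hbneg.le, hapos.le⟩
    obtain ⟨c, hc1, hc2⟩ := hsub h0mem
    exact ⟨c, lt_of_lt_of_le ha0 hc1.1, hc1.2, hc2⟩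
  obtain ⟨c, hc0, hcY, hc⟩ := hIVT Y hY0 hYneg
  -- the set of zeros
  set K := {y : ℝ | δ ≤ y ∧ Af r y = 0} with hK
  have hKclosed : IsClosed K := by
    have : K = Ici δ ∩ (Af r)⁻¹' {0} := by
      ext y; simp [hK, mem_Ici]
    rw [this]
    exact isClosed_Ici.inter (isClosed_singleton.preimage (continuous_Af r))
  have hKne : K.Nonempty := ⟨c, hzge c hc0 hc, hc⟩
  have hKbdd : BddBelow K := ⟨δ, fun y hy => hy.1⟩
  set ys := sInf K with hys
  have hysK : ys ∈ K := hKclosed.csInf_mem hKne hKbdd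
  have hys0 : 0 < ys := lt_of_lt_of_le hδ0 hysK.1
  have hysz : Af r ys = 0 := hysK.2
  refine ⟨ys, hys0, hysz, ?_, ?_⟩
  · -- positive before ys
    intro y hy0 hyys
    rcases lt_or_ge y δ with hyδ | hyδ
    · exact hδpos y hy0 hyδ
    · by_contra hle
      push_neg at hle
      rcases lt_or_eq_of_le hle with hlt | heq
      · obtain ⟨c', hc'0, hc'y, hc'⟩ := hIVT y hy0 hlt
        have : ys ≤ c' := csInf_le hKbdd ⟨hzge c' hc'0 hc', hc'⟩
        linarith
      · have : ys ≤ y := csInf_le hKbdd ⟨hyδ, heq⟩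
        linarith
  · -- negative after ys
    intro y2 hy2
    by_contra hge
    push_neg at hge
    obtain ⟨ε, hε0, hεneg⟩ := Af_neg_right_of_zero r ys hr hys0 hysz
    set w := min (ys + ε/2) ((ys + y2)/2) with hw
    have hw1 : ys < w := by apply lt_min <;> linarith
    have hw2 : w < ys + ε := by
      calc w ≤ ys + ε/2 := min_le_left _ _
      _ < ys + ε := by linarith
    have hw3 : w < y2 := by
      calc w ≤ (ys + y2)/2 := min_le_right _ _
      _ < y2 := by linarith
    have hwneg : Af r w < 0 := hεneg w hw1 hw2
    set K2 := {u : ℝ | w ≤ u ∧ u ≤ y2 ∧ 0 ≤ Af r u} with hK2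
    have hK2closed : IsClosed K2 := by
      have : K2 = (Icc w y2) ∩ (Af r)⁻¹' (Ici 0) := by
        ext u; simp [hK2, mem_Icc, and_assoc]
      rw [this]
      exact isClosed_Icc.inter (isClosed_Ici.preimage (continuous_Af r))
    have hK2ne : K2.Nonempty := ⟨y2, hw3.le, le_refl _, hge⟩
    have hK2bdd : BddBelow K2 := ⟨w, fun u hu => hu.1⟩
    set z := sInf K2 with hz
    have hzK2 : z ∈ K2 := hK2closed.csInf_mem hK2ne hK2bdd
    have hwz : w < z := by
      rcases lt_or_eq_of_le hzK2.1 with h | h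
      · exact h
      · exact absurd (h ▸ hzK2.2.2) (not_le.mpr hwneg)
    have hbefore : ∀ u, w ≤ u → u < z → Af r u < 0 := by
      intro u hu1 hu2
      by_contra hge2
      push_neg at hge2
      have : z ≤ u := csInf_le hK2bdd ⟨hu1, by linarith [hzK2.2.1], hge2⟩
      linarith
    have hz0 : Af r z = 0 := by
      have hle2 : Af r z ≤ 0 := by
        have hlim : Tendsto (Af r) (𝓝[<] z) (𝓝 (Af r z)) :=
          (continuous_Af r).continuousAt.continuousWithinAt
        apply le_of_tendsto hlim
        filter_upwards [Ioo_mem_nhdsLT_of_mem (show z ∈ Ioc w z from ⟨hwz, le_refl z⟩)]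
        intro u hu
        exact (hbefore u hu.1.le hu.2).le
      linarith [hzK2.2.2]
    have := deriv_nonneg_left r z w hr hwz hbefore hz0
    have := Af'_neg r z hr (by linarith) hz0
    linarith


noncomputable def Lf (r y : ℝ) : ℝ :=
  Real.log (Real.cosh (r*y)) + r * Real.log (Real.cosh (y/r))
    - (r+1) * Real.log (Real.cosh y)

lemma hasDerivAt_log_cosh (z : ℝ) :
    HasDerivAt (fun x => Real.log (Real.cosh x)) (Real.tanh z) z := by
  have h := (Real.hasDerivAt_cosh z).log (Real.cosh_pos z).ne'
  have : Real.sinh z / Real.cosh z = Real.tanh z := (Real.tanh_eq_sinh_div_cosh z).symm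
  rwa [this] at h

lemma hasDerivAt_Lf (r y : ℝ) (hr : r ≠ 0) : HasDerivAt (Lf r) (Af r y) y := by
  have h1 : HasDerivAt (fun y => Real.log (Real.cosh (r*y))) (Real.tanh (r*y) * r) y :=
    (hasDerivAt_log_cosh (r*y)).comp y (by simpa using (hasDerivAt_id y).const_mul r)
  have h2 : HasDerivAt (fun y => Real.log (Real.cosh (y/r))) (Real.tanh (y/r) * (1/r)) y := by
    have hd : HasDerivAt (fun y : ℝ => y/r) (1/r) y := by
      simpa using (hasDerivAt_id y).div_const r
    exact (hasDerivAt_log_cosh (y/r)).comp y hd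
  have h3 := (Real.hasDerivAt_cosh y).log (Real.cosh_pos y).ne'
  have h3' : HasDerivAt (fun y => Real.log (Real.cosh y)) (Real.tanh y) y := by
    have : Real.sinh y / Real.cosh y = Real.tanh y := (Real.tanh_eq_sinh_div_cosh y).symm
    rwa [this] at h3
  have hsum := (h1.add (h2.const_mul r)).sub (h3'.const_mul (r+1))
  refine HasDerivAt.congr_deriv hsum ?_
  unfold Af
  field_simp

lemma continuous_Lf (r : ℝ) : Continuous (Lf r) := by
  unfold Lf
  have hc : ∀ c : ℝ, Continuous (fun y : ℝ => Real.log (Real.cosh (c*y))) := by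
    intro c
    apply (Real.continuous_cosh.comp (continuous_const.mul continuous_id)).log
    intro x
    exact (Real.cosh_pos _).ne'
  have h2 : Continuous (fun y : ℝ => Real.log (Real.cosh (y/r))) := by
    apply (Real.continuous_cosh.comp (continuous_id.div_const r)).log
    intro x
    exact (Real.cosh_pos _).ne'
  have h3 : Continuous (fun y : ℝ => Real.log (Real.cosh y)) := by
    apply Real.continuous_cosh.log
    intro x
    exact (Real.cosh_pos _).ne'
  exact ((hc r).add (continuous_const.mul h2)).sub (continuous_const.mul h3)

lemma Lf_strictMonoOn (r ys : ℝ) (hr : 1 < r) (hys : 0 < ys)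
    (hpos : ∀ y, 0 < y → y < ys → 0 < Af r y) :
    StrictMonoOn (Lf r) (Icc 0 ys) := by
  apply strictMonoOn_of_deriv_pos (convex_Icc 0 ys) (continuous_Lf r).continuousOn
  intro y hy
  rw [interior_Icc] at hy
  rw [(hasDerivAt_Lf r y (by linarith : r ≠ 0)).deriv]
  exact hpos y hy.1 hy.2

lemma Lf_strictAntiOn (r ys : ℝ) (hr : 1 < r)
    (hneg : ∀ y, ys < y → Af r y < 0) :
    StrictAntiOn (Lf r) (Ici ys) := by
  apply strictAntiOn_of_deriv_neg (convex_Ici ys) (continuous_Lf r).continuousOn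
  intro y hy
  rw [interior_Ici] at hy
  rw [(hasDerivAt_Lf r y (by linarith : r ≠ 0)).deriv]
  exact hneg y hy

-- Lf r y = log(1+exp(-2ry)) + r log(1+exp(-2y/r)) - (r+1) log(1+exp(-2y))
lemma log_cosh_eq (z : ℝ) :
    Real.log (Real.cosh z) = z + Real.log (1 + Real.exp (-(2*z))) - Real.log 2 := by
  have h1 : Real.cosh z = Real.exp z * (1 + Real.exp (-(2*z))) / 2 := by
    rw [Real.cosh_eq]
    have h2 : Real.exp z * (1 + Real.exp (-(2*z))) = Real.exp z + Real.exp (-z) := by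
      rw [mul_add, mul_one, ← Real.exp_add]
      congr 2
      ring
    rw [h2]
  rw [h1]
  rw [Real.log_div (by positivity) (by norm_num), Real.log_mul (by positivity) (by positivity),
    Real.log_exp]

lemma Lf_eq (r y : ℝ) (hr : 0 < r) :
    Lf r y = Real.log (1 + Real.exp (-(2*(r*y)))) + r * Real.log (1 + Real.exp (-(2*(y/r))))
      - (r+1) * Real.log (1 + Real.exp (-(2*y))) := by
  unfold Lf
  rw [log_cosh_eq (r*y), log_cosh_eq (y/r), log_cosh_eq y]
  have : r * (y/r) = y := by field_simp
  nlinarith [this]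

lemma Lf_tendsto (r : ℝ) (hr : 0 < r) : Tendsto (Lf r) atTop (𝓝 0) := by
  have hlim : ∀ c : ℝ, 0 < c → Tendsto (fun y : ℝ => Real.log (1 + Real.exp (-(2*(c*y))))) atTop (𝓝 0) := by
    intro c hc
    have h0 : Tendsto (fun y : ℝ => (2*c) * y) atTop atTop :=
      Tendsto.const_mul_atTop (by positivity) tendsto_id
    have h1 : Tendsto (fun y : ℝ => -(2*(c*y))) atTop atBot := by
      have h1' := tendsto_neg_atBot_iff.mpr h0
      have : (fun y : ℝ => -(2*(c*y))) = fun y : ℝ => -((2*c)*y) := by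
        funext y; ring
      rw [this]
      exact h1'
    have h2 : Tendsto (fun y : ℝ => Real.exp (-(2*(c*y)))) atTop (𝓝 0) :=
      Real.tendsto_exp_atBot.comp h1
    have h3 : Tendsto (fun y : ℝ => 1 + Real.exp (-(2*(c*y)))) atTop (𝓝 1) := by
      simpa using tendsto_const_nhds.add h2
    have h4 := (Real.continuousAt_log (by norm_num : (1:ℝ) ≠ 0)).tendsto.comp h3
    simpa [Function.comp_def] using h4
  have hA := hlim r hr
  have hB := hlim (1/r) (by positivity)
  have hB' : Tendsto (fun y : ℝ => Real.log (1 + Real.exp (-(2*(y/r))))) atTop (𝓝 0) := by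
    have : (fun y : ℝ => Real.log (1 + Real.exp (-(2*(y/r)))))
        = fun y : ℝ => Real.log (1 + Real.exp (-(2*((1/r)*y)))) := by
      funext y; congr 3; ring
    rw [this]
    exact hB
  have hC := hlim 1 one_pos
  have hC' : Tendsto (fun y : ℝ => Real.log (1 + Real.exp (-(2*y)))) atTop (𝓝 0) := by
    have : (fun y : ℝ => Real.log (1 + Real.exp (-(2*y))))
        = fun y : ℝ => Real.log (1 + Real.exp (-(2*(1*y)))) := by
      funext y; congr 3; ring
    rw [this]
    exact hC
  have htot := (hA.add (hB'.const_mul r)).sub (hC'.const_mul (r+1))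
  have heq : (fun y : ℝ => Real.log (1 + Real.exp (-(2*(r*y)))) + r * Real.log (1 + Real.exp (-(2*(y/r))))
      - (r+1) * Real.log (1 + Real.exp (-(2*y)))) = Lf r := by
    funext y
    rw [Lf_eq r y hr]
  rw [heq] at htot
  simpa using htot


noncomputable def yb (b : ℝ) : ℝ := Real.log ((1-b)/b) / 2

lemma one_add_exp_two (z : ℝ) :
    1 + Real.exp (2*z) = 2 * Real.exp z * Real.cosh z := by
  rw [Real.cosh_eq]
  have h1 : Real.exp z * Real.exp z = Real.exp (2*z) := by
    rw [← Real.exp_add]; congr 1; ring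
  have h2 : Real.exp z * Real.exp (-z) = 1 := by
    rw [← Real.exp_add]; simp
  field_simp
  nlinarith [h1, h2]

lemma R_zero (p : ℝ) (hp : 1 < p) : R p 0 = 1 := by
  unfold R
  have h1 : p - 1 ≠ 0 := by linarith
  have h2 : 1 / (p - 1) ≠ 0 := by positivity
  rw [Real.zero_rpow h1, Real.zero_rpow h2]
  norm_num

lemma R_formula (p b : ℝ) (hp : 1 < p) (hb0 : 0 < b) (hb1 : b < 1) :
    R p b = Real.exp (Lf (p-1) (yb b)) := by
  set q := p - 1 with hqdef
  have hq : 0 < q := by rw [hqdef]; linarith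
  have h1b : 0 < 1 - b := by linarith
  set Y := yb b with hY
  set E := (1-b)/b with hE
  have hE0 : 0 < E := by positivity
  have hexpY : Real.exp (2*Y) = E := by
    rw [hY]; unfold yb
    rw [show 2 * (Real.log ((1-b)/b) / 2) = Real.log ((1-b)/b) by ring, Real.exp_log hE0]
  -- i2 : 1 + E^t = 2 exp(tY) cosh(tY)
  have i2 : ∀ t : ℝ, 1 + E^t = 2 * Real.exp (t*Y) * Real.cosh (t*Y) := by
    intro t
    have e1 : E^t = Real.exp (2*(t*Y)) := by
      rw [← hexpY, ← Real.exp_mul]; congr 1; ring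
    rw [e1, one_add_exp_two (t*Y)]
  -- i1 : f_t = b^t (1+E^t)
  have i1 : ∀ t : ℝ, b^t + (1-b)^t = b^t * (1 + E^t) := by
    intro t
    have hbe : b * E = 1 - b := by rw [hE]; field_simp
    have : (1-b)^t = b^t * E^t := by
      rw [← hbe, Real.mul_rpow hb0.le hE0.le]
    rw [this]; ring
  -- log b
  have h1E : 0 < 1 + E := by linarith
  have hbinv : b = (1+E)⁻¹ := by
    rw [hE]; field_simp; ring
  have hlogb : Real.log b = -(Real.log 2 + Y + Real.log (Real.cosh Y)) := by
    rw [hbinv, Real.log_inv]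
    have e3 : 1 + E = 2 * Real.exp Y * Real.cosh Y := by
      have := i2 1
      rw [Real.rpow_one] at this
      simpa using this
    rw [e3, Real.log_mul (by positivity) (Real.cosh_pos Y).ne',
      Real.log_mul (by norm_num) (Real.exp_pos Y).ne', Real.log_exp]
  -- log f_t
  have hft_pos : ∀ t : ℝ, 0 < b^t + (1-b)^t := by
    intro t
    have : 0 < b^t := Real.rpow_pos_of_pos hb0 t
    have : 0 < (1-b)^t := Real.rpow_pos_of_pos h1b t
    positivity
  have hlogf : ∀ t : ℝ, Real.log (b^t + (1-b)^t)
      = t*Real.log b + Real.log 2 + t*Y + Real.log (Real.cosh (t*Y)) := by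
    intro t
    rw [i1 t, Real.log_mul (Real.rpow_pos_of_pos hb0 t).ne' (by
        have := i2 t
        nlinarith [Real.exp_pos (t*Y), Real.cosh_pos (t*Y), this]),
      Real.log_rpow hb0, i2 t,
      Real.log_mul (by positivity) (Real.cosh_pos (t*Y)).ne',
      Real.log_mul (by norm_num) (Real.exp_pos (t*Y)).ne', Real.log_exp]
    ring
  -- R positive
  have hRpos : 0 < R p b := by
    unfold R
    have h4 := hft_pos (p-1)
    have h5 := hft_pos (1/(p-1))
    have h6 : 0 < (b ^ (1/(p-1)) + (1-b) ^ (1/(p-1))) ^ (p-1) :=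
      Real.rpow_pos_of_pos h5 _
    positivity
  -- log R = Lf q Y
  have hlogR : Real.log (R p b) = Lf q Y := by
    unfold R
    rw [← hqdef]
    rw [Real.log_mul (hft_pos q).ne' (Real.rpow_pos_of_pos (hft_pos (1/q)) q).ne',
      Real.log_rpow (hft_pos (1/q)), hlogf q, hlogf (1/q), hlogb]
    unfold Lf
    have e7 : (1/q)*Y = Y/q := by ring
    rw [e7]
    field_simp
    ring
  rw [← hlogR, Real.exp_log hRpos]

lemma Lf_scale (q y : ℝ) (hq : 0 < q) : Lf q y = q * Lf (1/q) y := by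
  unfold Lf
  have e1 : (1/q)*y = y/q := by ring
  have e2 : y/(1/q) = q*y := by field_simp
  rw [e1, e2]
  field_simp
  ring



lemma Lf_pos_on (r ys : ℝ) (hr : 1 < r) (hanti : StrictAntiOn (Lf r) (Ici ys)) :
    ∀ z, ys ≤ z → 0 < Lf r z := by
  intro z hz
  have h1 : Lf r (z+1) < Lf r z := hanti (mem_Ici.mpr hz) (mem_Ici.mpr (by linarith)) (by linarith)
  have h2 : 0 ≤ Lf r (z+1) := by
    apply le_of_tendsto (Lf_tendsto r (by linarith))
    filter_upwards [eventually_ge_atTop (z+1)] with w hw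
    exact hanti.antitoneOn (mem_Ici.mpr (by linarith)) (mem_Ici.mpr (by linarith)) hw
  linarith

lemma yb_anti {b1 b2 : ℝ} (hb1 : 0 < b1) (hb2 : b2 < 1) (hlt : b1 < b2) :
    yb b2 < yb b1 := by
  have hb10 : b1 < 1 := by linarith
  have hb20 : 0 < b2 := by linarith
  have h1 : (1-b2)/b2 < (1-b1)/b1 := by
    rw [div_lt_div_iff₀ hb20 hb1]
    nlinarith
  have h2 : 0 < (1-b2)/b2 := by
    have : 0 < 1 - b2 := by linarith
    positivity
  have := Real.log_lt_log h2 h1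
  unfold yb
  linarith

lemma yb_half : yb (1/2) = 0 := by
  unfold yb
  norm_num

end S15

theorem stmt15 (p : ℝ) (hp : 1 < p) (hp2 : p ≠ 2) :
    ∃ bp ∈ Set.Ioo (0:ℝ) (1/2),
      StrictMonoOn (R p) (Set.Icc 0 bp) ∧
      StrictAntiOn (R p) (Set.Icc bp (1/2)) ∧
      ∀ b ∈ Set.Icc (0:ℝ) (1/2), b ≠ bp → R p b < R p bp := by
  have hq0 : 0 < p - 1 := by linarith
  have hq1 : p - 1 ≠ 1 := by intro h; apply hp2; linarith
  obtain ⟨r, κ, hr, hκ0, hscale⟩ :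
      ∃ r κ : ℝ, 1 < r ∧ 0 < κ ∧ ∀ y, S15.Lf (p-1) y = κ * S15.Lf r y := by
    rcases lt_trichotomy (p-1) 1 with h | h | h
    · exact ⟨1/(p-1), p-1, (one_lt_div hq0).mpr h, hq0,
        fun y => S15.Lf_scale (p-1) y hq0⟩
    · exact absurd h hq1
    · exact ⟨p-1, 1, h, one_pos, fun y => (one_mul _).symm⟩
  obtain ⟨ys, hys0, hysz, hpos, hneg⟩ := S15.exists_ystar r hr
  have hmono := S15.Lf_strictMonoOn r ys hr hys0 hpos
  have hanti := S15.Lf_strictAntiOn r ys hr hneg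
  have hLfpos := S15.Lf_pos_on r ys hr hanti
  have hexp1 : 1 < Real.exp (2*ys) := by
    calc (1:ℝ) = Real.exp 0 := Real.exp_zero.symm
    _ < Real.exp (2*ys) := Real.exp_lt_exp.mpr (by linarith)
  set bp := 1/(1 + Real.exp (2*ys)) with hbp
  have hbp0 : 0 < bp := by rw [hbp]; positivity
  have hbp2 : bp < 1/2 := by
    rw [hbp]
    rw [div_lt_div_iff₀ (by positivity) (by norm_num)]
    linarith
  have hbp1 : bp < 1 := by linarith
  have hybbp : S15.yb bp = ys := by
    have hEe : (0:ℝ) < 1 + Real.exp (2*ys) := by positivity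
    have he : (1 - bp)/bp = Real.exp (2*ys) := by
      rw [hbp]
      field_simp
      ring
    unfold S15.yb
    rw [he, Real.log_exp]
    ring
  -- R in terms of Lf r
  have hRform : ∀ b, 0 < b → b < 1 → R p b = Real.exp (κ * S15.Lf r (S15.yb b)) := by
    intro b h0 h1
    rw [S15.R_formula p b hp h0 h1, hscale]
  have hcmp : ∀ b1 b2, 0 < b1 → b1 < 1 → 0 < b2 → b2 < 1 →
      (R p b1 < R p b2 ↔ S15.Lf r (S15.yb b1) < S15.Lf r (S15.yb b2)) := by
    intro b1 b2 h10 h11 h20 h21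
    rw [hRform b1 h10 h11, hRform b2 h20 h21, Real.exp_lt_exp]
    exact mul_lt_mul_iff_right₀ hκ0
  -- membership conversions
  have hyb_ge : ∀ b, 0 < b → b ≤ bp → ys ≤ S15.yb b := by
    intro b h0 hle
    rcases eq_or_lt_of_le hle with h | h
    · rw [h, hybbp]
    · rw [← hybbp]
      exact (S15.yb_anti h0 hbp1 h).le
  have hyb_le : ∀ b, bp ≤ b → b < 1 → S15.yb b ≤ ys := by
    intro b hle h1
    rcases eq_or_lt_of_le hle with h | h
    · rw [← h, hybbp]
    · rw [← hybbp]
      exact (S15.yb_anti hbp0 h1 h).le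
  have hyb_nonneg : ∀ b, 0 < b → b ≤ 1/2 → 0 ≤ S15.yb b := by
    intro b h0 hle
    rcases eq_or_lt_of_le hle with h | h
    · rw [h, S15.yb_half]
    · rw [← S15.yb_half]
      exact (S15.yb_anti h0 (by norm_num) h).le
  -- part 1 : strict mono on [0, bp]
  have hM : StrictMonoOn (R p) (Set.Icc 0 bp) := by
    intro b1 hb1 b2 hb2 hlt
    rw [Set.mem_Icc] at hb1 hb2
    have hb20 : 0 < b2 := lt_of_le_of_lt hb1.1 hlt
    have hb21 : b2 < 1 := by linarith [hb2.2]
    have hge2 : ys ≤ S15.yb b2 := hyb_ge b2 hb20 hb2.2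
    rcases eq_or_lt_of_le hb1.1 with h0 | h0
    · rw [← h0, S15.R_zero p hp, hRform b2 hb20 hb21]
      have hL : 0 < κ * S15.Lf r (S15.yb b2) := mul_pos hκ0 (hLfpos _ hge2)
      calc (1:ℝ) = Real.exp 0 := Real.exp_zero.symm
      _ < Real.exp (κ * S15.Lf r (S15.yb b2)) := Real.exp_lt_exp.mpr hL
    · have hb11 : b1 < 1 := by linarith [hb1.2]
      rw [hcmp b1 b2 h0 hb11 hb20 hb21]
      have h2 : S15.yb b2 < S15.yb b1 := S15.yb_anti h0 hb21 hlt
      exact hanti (mem_Ici.mpr hge2) (mem_Ici.mpr (by linarith)) h2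
  -- part 2 : strict anti on [bp, 1/2]
  have hA : StrictAntiOn (R p) (Set.Icc bp (1/2)) := by
    intro b1 hb1 b2 hb2 hlt
    rw [Set.mem_Icc] at hb1 hb2
    have hb10 : 0 < b1 := lt_of_lt_of_le hbp0 hb1.1
    have hb20 : 0 < b2 := by linarith
    have hb21 : b2 < 1 := by linarith [hb2.2]
    have hb11 : b1 < 1 := by linarith
    rw [hcmp b2 b1 hb20 hb21 hb10 hb11]
    have hyy : S15.yb b2 < S15.yb b1 := S15.yb_anti hb10 hb21 hlt
    have m2 : S15.yb b2 ∈ Set.Icc 0 ys :=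
      ⟨hyb_nonneg b2 hb20 hb2.2, hyb_le b2 (by linarith [hb1.1]) hb21⟩
    have m1 : S15.yb b1 ∈ Set.Icc 0 ys :=
      ⟨hyb_nonneg b1 hb10 (by linarith [hb2.2]), hyb_le b1 hb1.1 hb11⟩
    exact hmono m2 m1 hyy
  refine ⟨bp, ⟨hbp0, hbp2⟩, hM, hA, ?_⟩
  intro b hb hne
  rw [Set.mem_Icc] at hb
  rcases lt_or_gt_of_ne hne with h | h
  · exact hM (Set.mem_Icc.mpr ⟨hb.1, h.le⟩) (Set.mem_Icc.mpr ⟨hbp0.le, le_refl bp⟩) h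
  · exact hA (Set.mem_Icc.mpr ⟨le_refl bp, hbp2.le⟩) (Set.mem_Icc.mpr ⟨h.le, hb.2⟩) h
end

section
/- For fixed r ∈ (0,1), define D21(z) = r²·sinh((1−r)z) + sinh(r(1−r)z) − r·sinh((1−r²)z). Then D21(z) < 0 for all z > 0. -/
open Real Set

lemma sinh_mul_lt_aux {r a : ℝ} (hr0 : 0 < r) (hr1 : r < 1) (ha : 0 < a) :
    Real.sinh (r * a) < r * Real.sinh a := by
  have key : StrictMonoOn (fun x => r * Real.sinh x - Real.sinh (r * x)) (Set.Ici 0) := by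
    apply strictMonoOn_of_deriv_pos (convex_Ici 0)
    · fun_prop
    · intro x hx
      rw [interior_Ici] at hx
      have hx' : (0:ℝ) < x := hx
      have h1 : HasDerivAt (fun x => r * Real.sinh x - Real.sinh (r * x))
          (r * Real.cosh x - Real.cosh (r * x) * r) x := by
        have := ((Real.hasDerivAt_sinh x).const_mul r).sub
          ((Real.hasDerivAt_sinh (r * x)).comp x ((hasDerivAt_id x).const_mul r))
        exact this.congr_deriv (by ring)
      rw [h1.deriv]
      have hc : Real.cosh (r * x) < Real.cosh x := by
        rw [Real.cosh_lt_cosh]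
        rw [abs_of_pos (mul_pos hr0 hx), abs_of_pos hx]
        nlinarith
      nlinarith
  have h := key (Set.self_mem_Ici) (Set.mem_Ici.2 ha.le) ha
  simpa using h

theorem stmt17 (r : ℝ) (hr : r ∈ Set.Ioo (0:ℝ) 1) (z : ℝ) (hz : 0 < z) :
    r ^ 2 * Real.sinh ((1 - r) * z) + Real.sinh (r * (1 - r) * z) -
      r * Real.sinh ((1 - r ^ 2) * z) < 0 := by
  obtain ⟨hr0, hr1⟩ := hr
  set a := (1 - r) * z with ha_def
  have ha : 0 < a := mul_pos (by linarith) hz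
  set b := r * a with hb_def
  have hb : 0 < b := mul_pos hr0 ha
  have hab : (1 - r ^ 2) * z = a + b := by rw [ha_def, hb_def]; ring
  have hsum : r * (1 - r) * z = b := by rw [hb_def, ha_def]; ring
  rw [hab, hsum, Real.sinh_add]
  -- goal: r^2 * sinh a + sinh b - r * (sinh a * cosh b + cosh a * sinh b) < 0
  have hsa : 0 < Real.sinh a := Real.sinh_pos_iff.2 ha
  have hsb : 0 < Real.sinh b := Real.sinh_pos_iff.2 hb
  have hca : 1 ≤ Real.cosh a := Real.one_le_cosh a
  have hcb1 : 1 < Real.cosh b := Real.one_lt_cosh.2 hb.ne'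
  have hkey : Real.sinh b < r * Real.sinh a := sinh_mul_lt_aux hr0 hr1 ha
  rcases le_or_gt (1 - r * Real.cosh a) 0 with h | h
  · nlinarith
  · -- sinh b * (1 - r cosh a) < r sinh a * (1 - r cosh a) ≤ r sinh a (cosh b - r)
    have h2 : 1 - r * Real.cosh a ≤ Real.cosh b - r := by nlinarith
    nlinarith
end

section
/- As p → ∞, C_p ~ 2^p/√(8ep), i.e., lim_{p→∞} C_p·√(8ep)/2^p = 1, where C_p = sup_{b∈[0,1]} (b^{p−1}+(1−b)^{p−1})·(b^{1/(p−1)}+(1−b)^{1/(p−1)})^{p−1}. -/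
open Real Set Filter

noncomputable def E (q b : ℝ) : ℝ :=
  (b ^ q + (1 - b) ^ q) * (b ^ (1/q) + (1 - b) ^ (1/q)) ^ q

noncomputable def Cp (p : ℝ) : ℝ := sSup ((fun b => R p b) '' Set.Icc (0:ℝ) 1)

lemma exp_rpow' (t q : ℝ) : Real.exp t ^ q = Real.exp (t * q) := by
  rw [Real.rpow_def_of_pos (Real.exp_pos t), Real.log_exp]

lemma log_ge' {z : ℝ} (hz : 0 < z) : 1 - 1/z ≤ Real.log z := by
  have h := Real.log_le_sub_one_of_pos (show (0:ℝ) < 1/z by positivity)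
  rw [Real.log_div one_ne_zero (ne_of_gt hz), Real.log_one] at h
  linarith

lemma log_one_add_ge' {u : ℝ} (h1 : -(1/2) ≤ u) (h2 : u ≤ 0) : u - 2*u^2 ≤ Real.log (1+u) := by
  have hu : 0 < 1 + u := by linarith
  have h := log_ge' hu
  have h3 : u - 2*u^2 ≤ 1 - 1/(1+u) := by
    have h4 : 1/(1+u) ≤ 1 - u + 2*u^2 := by
      rw [div_le_iff₀ hu]; nlinarith
    linarith
  linarith

lemma sqrt_eq_exp' {x : ℝ} (hx : 0 < x) : Real.sqrt x = Real.exp (Real.log x / 2) := by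
  rw [Real.sqrt_eq_rpow, Real.rpow_def_of_pos hx]; ring_nf

lemma exp_sub_one_le' {v : ℝ} (hv : v ≤ 0) : Real.exp v - 1 ≤ v * Real.exp (v/2) := by
  have hs : Real.sinh (v/2) ≤ v/2 := by
    rcases eq_or_lt_of_le hv with h | h
    · simp [← h]
    · exact le_of_lt (Real.sinh_lt_self_iff.2 (by linarith))
  have h2 : Real.exp v - 1 = Real.exp (v/2) * (2 * Real.sinh (v/2)) := by
    rw [Real.sinh_eq, show Real.exp v = Real.exp (v/2) * Real.exp (v/2) by
      rw [← Real.exp_add]; ring_nf, show -(v/2) = 0 - v/2 by ring, Real.exp_sub, Real.exp_zero]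
    field_simp
  rw [h2]
  calc Real.exp (v/2) * (2 * Real.sinh (v/2)) ≤ Real.exp (v/2) * v :=
        mul_le_mul_of_nonneg_left (by linarith) (le_of_lt (Real.exp_pos _))
    _ = v * Real.exp (v/2) := by ring

lemma lowerE {q : ℝ} (hq : 100 ≤ q) :
    Real.exp (-(1:ℝ)/2) * 2^q / Real.sqrt (2*q) *
      Real.exp (-(3/(2*q)) - (Real.log (2*q) + 1/q)^2/(2*q)) ≤ E q (1/(2*q)) := by
  have hq0 : (0:ℝ) < q := by linarith
  have hqne : q ≠ 0 := ne_of_gt hq0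
  set b : ℝ := 1/(2*q) with hbdef
  have hb0 : 0 < b := by positivity
  have hb200 : b ≤ 1/200 := by
    rw [hbdef, div_le_div_iff₀ (by linarith) (by norm_num)]; linarith
  have h1b : (0:ℝ) < 1 - b := by linarith
  have hlogb : Real.log b = -Real.log (2*q) := by
    rw [hbdef, one_div, Real.log_inv]
  have hlog2q : 0 < Real.log (2*q) := Real.log_pos (by linarith)
  have hlogq : Real.log (2*q) ≤ q - 0.3 := by
    have h1 : Real.log (2*q) = Real.log 2 + Real.log q :=
      Real.log_mul (by norm_num) hqne
    have h2 : Real.log q ≤ q - 1 := Real.log_le_sub_one_of_pos hq0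
    have h3 : Real.log 2 ≤ 0.7 := le_of_lt (lt_trans Real.log_two_lt_d9 (by norm_num))
    linarith
  have hqb2 : q * b = 1/2 := by rw [hbdef]; field_simp; try ring
  -- first factor lower bound
  have g1 : Real.exp (-(1:ℝ)/2 - 1/q) ≤ (1-b) ^ q := by
    have hl : -b/(1-b) ≤ Real.log (1-b) := by
      have h5 := log_ge' h1b
      have he : 1 - 1/(1-b) = -b/(1-b) := by field_simp; ring
      linarith [he ▸ h5]
    have hqb : q * (-b/(1-b)) = -(1/2)/(1-b) := by
      rw [← hqb2]; field_simp; try ring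
    have hkey : -(1:ℝ)/2 - 1/q ≤ q * Real.log (1-b) := by
      have h6 : q * (-b/(1-b)) ≤ q * Real.log (1-b) :=
        mul_le_mul_of_nonneg_left hl (le_of_lt hq0)
      rw [hqb] at h6
      have h8 : (1/2)/(1-b) ≤ 1/2 + 1/q := by
        rw [div_le_iff₀ h1b, hbdef]
        field_simp
        nlinarith
      have e : -(1/2)/(1-b) = -((1/2)/(1-b)) := by ring
      rw [e] at h6
      linarith
    calc Real.exp (-(1:ℝ)/2 - 1/q) ≤ Real.exp (q * Real.log (1-b)) := Real.exp_le_exp.2 hkey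
      _ = (1-b) ^ q := by rw [Real.rpow_def_of_pos h1b]; ring_nf
  -- second factor lower bound
  set x : ℝ := (Real.log b - 2*b)/2 with hxdef
  have hx_neg : x ≤ 0 := by
    rw [hxdef]
    have : Real.log b < 0 := by rw [hlogb]; linarith
    nlinarith
  have hx_ge : -(q/2) ≤ x := by
    rw [hxdef, hlogb]
    nlinarith
  have hu1 : -(1/2) ≤ x/q := by
    rw [show -(1/2 : ℝ) = -(q/2)/q by field_simp; try ring]
    gcongr
  have hu2 : x/q ≤ 0 := div_nonpos_of_nonpos_of_nonneg hx_neg (le_of_lt hq0)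
  have hbase : (0:ℝ) ≤ 1 + x/q := by linarith
  have g2 : 2*(1 + x/q) ≤ b ^ (1/q) + (1-b) ^ (1/q) := by
    have t1 : 1 + Real.log b/q ≤ b ^ (1/q) := by
      rw [Real.rpow_def_of_pos hb0]
      have h9 := Real.add_one_le_exp (Real.log b * (1/q))
      have e9 : Real.log b * (1/q) = Real.log b/q := by ring
      rw [e9] at h9
      rw [e9]
      linarith
    have t2 : 1 - 2*b/q ≤ (1-b) ^ (1/q) := by
      rw [Real.rpow_def_of_pos h1b]
      have h9 := Real.add_one_le_exp (Real.log (1-b) * (1/q))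
      have hl : -(2*b) ≤ Real.log (1-b) := by
        have h5 := log_ge' h1b
        have he : 1 - 1/(1-b) = -b/(1-b) := by field_simp; ring
        have h10 : -(2*b) ≤ -b/(1-b) := by
          rw [neg_div, neg_le_neg_iff, div_le_iff₀ h1b]
          nlinarith
        linarith [he ▸ h5]
      have h11 : -(2*b)/q ≤ Real.log (1-b)/q := by gcongr
      have e9 : Real.log (1-b) * (1/q) = Real.log (1-b)/q := by ring
      rw [e9] at h9
      rw [e9]
      have e10 : -(2*b)/q = -(2*b/q) := by ring
      rw [e10] at h11
      linarith
    have e11 : 2*(1 + x/q) = (1 + Real.log b/q) + (1 - 2*b/q) := by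
      rw [hxdef]; field_simp; ring
    rw [e11]
    exact add_le_add t1 t2
  have g3 : (2*(1 + x/q)) ^ q ≤ (b ^ (1/q) + (1-b) ^ (1/q)) ^ q :=
    Real.rpow_le_rpow (by positivity) g2 (le_of_lt hq0)
  have g4 : (2*(1 + x/q)) ^ q = 2^q * (1 + x/q) ^ q :=
    Real.mul_rpow (by norm_num) hbase
  have g5 : Real.exp (x - 2*x^2/q) ≤ (1 + x/q) ^ q := by
    rcases eq_or_lt_of_le hbase with hzero | hpos
    · exfalso
      have : x/q = -1 := by linarith
      rw [this] at hu1; norm_num at hu1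
    · rw [Real.rpow_def_of_pos hpos]
      apply Real.exp_le_exp.2
      have h12 := log_one_add_ge' hu1 hu2
      have h13 : q * (x/q - 2*(x/q)^2) ≤ q * Real.log (1 + x/q) :=
        mul_le_mul_of_nonneg_left h12 (le_of_lt hq0)
      have e13 : q * (x/q - 2*(x/q)^2) = x - 2*x^2/q := by
        field_simp
      rw [e13] at h13
      linarith [h13]
  -- assemble
  have hS2nn : (0:ℝ) ≤ (b ^ (1/q) + (1-b) ^ (1/q)) ^ q := by positivity
  have hEge : Real.exp (-(1:ℝ)/2 - 1/q) * (2^q * Real.exp (x - 2*x^2/q)) ≤ E q b := by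
    have step : Real.exp (-(1:ℝ)/2 - 1/q) * (2^q * Real.exp (x - 2*x^2/q)) ≤
        (1-b) ^ q * ((b ^ (1/q) + (1-b) ^ (1/q)) ^ q) := by
      apply mul_le_mul g1 _ (by positivity) (by positivity)
      calc 2^q * Real.exp (x - 2*x^2/q) ≤ 2^q * (1 + x/q) ^ q := by
            apply mul_le_mul_of_nonneg_left g5 (by positivity)
        _ = (2*(1 + x/q)) ^ q := g4.symm
        _ ≤ (b ^ (1/q) + (1-b) ^ (1/q)) ^ q := g3
    calc Real.exp (-(1:ℝ)/2 - 1/q) * (2^q * Real.exp (x - 2*x^2/q)) ≤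
        (1-b) ^ q * ((b ^ (1/q) + (1-b) ^ (1/q)) ^ q) := step
      _ ≤ E q b := by
          unfold E
          apply mul_le_mul_of_nonneg_right _ hS2nn
          have : (0:ℝ) ≤ b ^ q := Real.rpow_nonneg (le_of_lt hb0) q
          linarith
  have h2q : (0:ℝ) < 2*q := by linarith
  have mergel : Real.exp (-(1:ℝ)/2) * 2^q / Real.sqrt (2*q) *
      Real.exp (-(3/(2*q)) - (Real.log (2*q) + 1/q)^2/(2*q))
      = Real.exp (Real.log 2 * q + (-(1:ℝ)/2) + -(Real.log (2*q)/2) +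
          (-(3/(2*q)) - (Real.log (2*q) + 1/q)^2/(2*q))) := by
    rw [Real.exp_add, Real.exp_add, Real.exp_add,
        ← Real.rpow_def_of_pos (by norm_num : (0:ℝ) < 2),
        sqrt_eq_exp' h2q, Real.exp_neg]
    ring
  have merger : Real.exp (-(1:ℝ)/2 - 1/q) * (2^q * Real.exp (x - 2*x^2/q))
      = Real.exp (Real.log 2 * q + (-(1:ℝ)/2 - 1/q) + (x - 2*x^2/q)) := by
    rw [Real.exp_add, Real.exp_add, ← Real.rpow_def_of_pos (by norm_num : (0:ℝ) < 2)]
    ring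
  have expo_eq : Real.log 2 * q + (-(1:ℝ)/2) + -(Real.log (2*q)/2) +
      (-(3/(2*q)) - (Real.log (2*q) + 1/q)^2/(2*q))
      = Real.log 2 * q + (-(1:ℝ)/2 - 1/q) + (x - 2*x^2/q) := by
    rw [hxdef, hlogb, hbdef]
    field_simp
    ring
  rw [mergel, expo_eq, ← merger]
  exact hEge

-- region A : 0.4 ≤ b ≤ 1/2
lemma regionA {q b : ℝ} (hq : 100 ≤ q) (hb1 : (0.4:ℝ) ≤ b) (hb2 : b ≤ 1/2) :
    E q b ≤ 2 * (0.6:ℝ) ^ q * 2 ^ q := by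
  have hq0 : (0 ≤ q) := by linarith
  have hb0 : (0:ℝ) ≤ b := by linarith
  have h1b : (0:ℝ) ≤ 1 - b := by linarith
  have f1 : b ^ q + (1-b) ^ q ≤ 2 * (0.6:ℝ) ^ q := by
    have h1 : b ^ q ≤ (0.6:ℝ) ^ q := Real.rpow_le_rpow hb0 (by linarith) hq0
    have h2 : (1-b) ^ q ≤ (0.6:ℝ) ^ q := Real.rpow_le_rpow h1b (by linarith) hq0
    linarith
  have f2 : (b ^ (1/q) + (1-b) ^ (1/q)) ^ q ≤ 2 ^ q := by
    apply Real.rpow_le_rpow (by positivity) _ hq0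
    have h1 : b ^ (1/q) ≤ 1 := Real.rpow_le_one hb0 (by linarith) (by positivity)
    have h2 : (1-b) ^ (1/q) ≤ 1 := Real.rpow_le_one h1b (by linarith) (by positivity)
    linarith
  calc E q b ≤ (2 * (0.6:ℝ) ^ q) * 2 ^ q := by
        apply mul_le_mul f1 f2 (by positivity) (by positivity)
    _ = 2 * (0.6:ℝ) ^ q * 2 ^ q := by ring

-- region B : 0 ≤ b ≤ exp (-2q)
lemma regionB {q b : ℝ} (hq : 100 ≤ q) (hb0 : 0 ≤ b) (hb : b ≤ Real.exp (-(2*q))) :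
    E q b ≤ 2 ^ q * Real.exp (-(q/2)) := by
  have hq0 : (0:ℝ) < q := by linarith
  have hb1 : b ≤ 1/2 := by
    have h1 : (2:ℝ) ≤ Real.exp (2*q) := by
      have := Real.add_one_le_exp (2*q); linarith
    have h2 : Real.exp (-(2*q)) = (Real.exp (2*q))⁻¹ := Real.exp_neg _
    rw [h2] at hb
    have : (Real.exp (2*q))⁻¹ ≤ 1/2 := by
      rw [inv_le_comm₀ (Real.exp_pos _) one_half_pos] at *
      · norm_num; linarith
    linarith
  have h1b : (0:ℝ) < 1 - b := by linarith
  have f1 : b ^ q + (1-b) ^ q ≤ 1 := by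
    have h1 : b ^ q ≤ b := by
      rcases eq_or_lt_of_le hb0 with h | h
      · rw [← h, Real.zero_rpow (ne_of_gt hq0)]
      · calc b ^ q ≤ b ^ (1:ℝ) := Real.rpow_le_rpow_of_exponent_ge h (by linarith) (by linarith)
          _ = b := Real.rpow_one b
    have h2 : (1-b) ^ q ≤ 1 - b := by
      calc (1-b) ^ q ≤ (1-b) ^ (1:ℝ) := Real.rpow_le_rpow_of_exponent_ge h1b (by linarith) (by linarith)
        _ = 1 - b := Real.rpow_one _
    linarith
  have key : b ^ (1/q) ≤ Real.exp (-2) := by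
    calc b ^ (1/q) ≤ (Real.exp (-(2*q))) ^ (1/q) := Real.rpow_le_rpow hb0 hb (by positivity)
      _ = Real.exp (-(2*q) * (1/q)) := exp_rpow' _ _
      _ = Real.exp (-2) := by rw [show -(2*q) * (1/q) = -2 by field_simp]
  have hnum : Real.exp (-2) ≤ Real.log 2 - 1/2 := by
    have h1 : (2.7182818283:ℝ) < Real.exp 1 := Real.exp_one_gt_d9
    have h2 : (0.6931471803:ℝ) < Real.log 2 := Real.log_two_gt_d9
    have : Real.exp (-2) = 1 / (Real.exp 1 * Real.exp 1) := by
      rw [← Real.exp_add]; rw [show (-2:ℝ) = -(1+1) by norm_num, Real.exp_neg]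
      norm_num
    rw [this]
    rw [div_le_iff₀ (by positivity)]
    nlinarith
  have f2 : (b ^ (1/q) + (1-b) ^ (1/q)) ^ q ≤ 2 ^ q * Real.exp (-(q/2)) := by
    have h2 : (1-b) ^ (1/q) ≤ 1 := Real.rpow_le_one (le_of_lt h1b) (by linarith) (by positivity)
    have step1 : (b ^ (1/q) + (1-b) ^ (1/q)) ^ q ≤ (Real.exp (b ^ (1/q))) ^ q := by
      apply Real.rpow_le_rpow (by positivity) _ (le_of_lt hq0)
      have := Real.add_one_le_exp (b ^ (1/q))
      linarith
    have step2 : (Real.exp (b ^ (1/q))) ^ q = Real.exp (b ^ (1/q) * q) := exp_rpow' _ _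
    have step3 : Real.exp (b ^ (1/q) * q) ≤ Real.exp ((Real.log 2 - 1/2) * q) := by
      apply Real.exp_le_exp.2
      apply mul_le_mul_of_nonneg_right (le_trans key hnum) (le_of_lt hq0)
    have step4 : Real.exp ((Real.log 2 - 1/2) * q) = 2 ^ q * Real.exp (-(q/2)) := by
      rw [Real.rpow_def_of_pos (by norm_num : (0:ℝ) < 2), ← Real.exp_add]
      ring_nf
    calc (b ^ (1/q) + (1-b) ^ (1/q)) ^ q ≤ (Real.exp (b ^ (1/q))) ^ q := step1
      _ = Real.exp (b ^ (1/q) * q) := step2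
      _ ≤ Real.exp ((Real.log 2 - 1/2) * q) := step3
      _ = 2 ^ q * Real.exp (-(q/2)) := step4
  calc E q b ≤ 1 * ((b ^ (1/q) + (1-b) ^ (1/q)) ^ q) := by
        apply mul_le_mul_of_nonneg_right f1 (by positivity)
    _ = (b ^ (1/q) + (1-b) ^ (1/q)) ^ q := one_mul _
    _ ≤ 2 ^ q * Real.exp (-(q/2)) := f2

lemma regionC {q b : ℝ} (hq : 100 ≤ q) (hb1 : Real.exp (-(2*q)) ≤ b) (hb2 : b ≤ 0.4) :
    E q b ≤ (1 + (2/3:ℝ)^q) * 2^q *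
      Real.exp ((Real.log (2*q)+1)^2/(4*q)) * Real.exp (-(1:ℝ)/2) / Real.sqrt (2*q) := by
  have hq0 : (0:ℝ) < q := by linarith
  have hb0 : (0:ℝ) < b := lt_of_lt_of_le (Real.exp_pos _) hb1
  have h1b : (0:ℝ) < 1 - b := by linarith
  set w : ℝ := -Real.log b with hw
  have hbw : b = Real.exp (-w) := by rw [hw, neg_neg, Real.exp_log hb0]
  have hw0 : 0 < w := by
    have : Real.log b < 0 := Real.log_neg hb0 (by linarith)
    linarith
  have hw2q : w ≤ 2*q := by
    have := (Real.le_log_iff_exp_le hb0).2 hb1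
    simp only [hw]; linarith
  -- F1 bound
  have f1 : b ^ q + (1-b) ^ q ≤ (1 + (2/3:ℝ)^q) * Real.exp (-(b*q)) := by
    have hbq : b ^ q = (b/(1-b)) ^ q * (1-b) ^ q := by
      rw [← Real.mul_rpow (by positivity) (le_of_lt h1b)]
      rw [div_mul_cancel₀ _ (ne_of_gt h1b)]
    have h1 : (b/(1-b)) ^ q ≤ (2/3:ℝ)^q := by
      apply Real.rpow_le_rpow (by positivity) _ (le_of_lt hq0)
      rw [div_le_div_iff₀ h1b (by norm_num)]
      nlinarith
    have h2 : (1-b) ^ q ≤ Real.exp (-(b*q)) := by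
      calc (1-b) ^ q ≤ (Real.exp (-b)) ^ q := by
            apply Real.rpow_le_rpow (le_of_lt h1b) _ (le_of_lt hq0)
            have := Real.add_one_le_exp (-b); linarith
        _ = Real.exp (-b * q) := exp_rpow' _ _
        _ = Real.exp (-(b*q)) := by ring_nf
    have hexp0 : (0:ℝ) ≤ Real.exp (-(b*q)) := le_of_lt (Real.exp_pos _)
    calc b ^ q + (1-b) ^ q = ((b/(1-b)) ^ q + 1) * (1-b) ^ q := by rw [hbq]; ring
      _ ≤ (1 + (2/3:ℝ)^q) * Real.exp (-(b*q)) := by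
          apply mul_le_mul (by linarith) h2 (by positivity)
          positivity
  -- F2 bound
  have f2 : (b ^ (1/q) + (1-b) ^ (1/q)) ^ q ≤
      2^q * Real.exp (-(w/2 * Real.exp (-(w/(2*q))))) := by
    set t : ℝ := b ^ (1/q) with ht
    have ht0 : 0 ≤ t := Real.rpow_nonneg (le_of_lt hb0) _
    have htexp : t = Real.exp (-(w/q)) := by
      rw [ht, Real.rpow_def_of_pos hb0, hw]
      congr 1; field_simp
    have step0 : (b ^ (1/q) + (1-b) ^ (1/q)) ^ q ≤ (1 + t) ^ q := by
      apply Real.rpow_le_rpow (by positivity) _ (le_of_lt hq0)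
      have : (1-b) ^ (1/q) ≤ 1 := Real.rpow_le_one (le_of_lt h1b) (by linarith) (by positivity)
      linarith
    have step1 : (1 + t) ^ q = 2^q * ((1+t)/2) ^ q := by
      rw [← Real.mul_rpow (by norm_num) (by positivity)]
      congr 1; ring
    have step2 : ((1+t)/2) ^ q ≤ Real.exp ((t-1)/2 * q) := by
      calc ((1+t)/2) ^ q ≤ (Real.exp ((t-1)/2)) ^ q := by
            apply Real.rpow_le_rpow (by positivity) _ (le_of_lt hq0)
            have := Real.add_one_le_exp ((t-1)/2); linarith
        _ = Real.exp ((t-1)/2 * q) := exp_rpow' _ _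
    have step3 : (t-1)/2 * q ≤ -(w/2 * Real.exp (-(w/(2*q)))) := by
      have hv : -(w/q) ≤ 0 := neg_nonpos.2 (by positivity)
      have := exp_sub_one_le' hv
      rw [← htexp] at this
      have h4 : -(w/q)/2 = -(w/(2*q)) := by ring
      rw [h4] at this
      -- this : t - 1 ≤ -(w/q) * exp (-(w/(2q)))
      have := mul_le_mul_of_nonneg_right (by linarith : (t-1)/2 ≤ (-(w/q) * Real.exp (-(w/(2*q))))/2) (le_of_lt hq0)
      calc (t-1)/2 * q ≤ (-(w/q) * Real.exp (-(w/(2*q))))/2 * q := this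
        _ = -(w/2 * Real.exp (-(w/(2*q)))) := by
            have hqne : q ≠ 0 := ne_of_gt hq0
            have h10 : -(w/q) * Real.exp (-(w/(2*q))) / 2 * q =
                -(w/q*q * Real.exp (-(w/(2*q)))/2) := by ring
            rw [h10, div_mul_cancel₀ w hqne]
            ring
    calc (b ^ (1/q) + (1-b) ^ (1/q)) ^ q ≤ (1+t) ^ q := step0
      _ = 2^q * ((1+t)/2) ^ q := step1
      _ ≤ 2^q * Real.exp ((t-1)/2 * q) := by
          apply mul_le_mul_of_nonneg_left step2 (by positivity)
      _ ≤ 2^q * Real.exp (-(w/2 * Real.exp (-(w/(2*q))))) := by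
          apply mul_le_mul_of_nonneg_left (Real.exp_le_exp.2 step3) (by positivity)
  -- key inequality
  set W : ℝ := Real.log (2*q) + 1 with hW
  have hlog2q : 0 < Real.log (2*q) := Real.log_pos (by linarith)
  have hW0 : 0 < W := by rw [hW]; linarith
  have hW2q : W ≤ 2*q := by
    have := Real.log_le_sub_one_of_pos (show (0:ℝ) < 2*q by linarith)
    rw [hW]; linarith
  have hexplog : Real.exp (Real.log (2*q)) = 2*q := Real.exp_log (by linarith)
  have key : 1/2 + Real.log (2*q)/2 - W^2/(4*q) ≤ b*q + w/2 * Real.exp (-(w/(2*q))) := by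
    rcases le_total w W with hcase | hcase
    · -- w ≤ W
      have e1 : (1 + (Real.log (2*q) - w))/2 ≤ b*q := by
        have h5 : Real.exp (Real.log (2*q) - w) = 2*q*b := by
          rw [sub_eq_add_neg, Real.exp_add, hexplog, ← hbw]
        have h6 := Real.add_one_le_exp (Real.log (2*q) - w)
        rw [h5] at h6
        nlinarith
      have e2 : w/2 - w^2/(4*q) ≤ w/2 * Real.exp (-(w/(2*q))) := by
        have h7 := Real.add_one_le_exp (-(w/(2*q)))
        have h6 : 0 ≤ w/2 := by linarith
        have h8 := mul_le_mul_of_nonneg_left h7 h6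
        have h9 : w/2 * (-(w/(2*q)) + 1) = w/2 - w^2/(4*q) := by
          field_simp; ring
        linarith
      have e3 : w^2 ≤ W^2 := by nlinarith
      have e4 : w^2/(4*q) ≤ W^2/(4*q) := by gcongr
      linarith
    · -- W ≤ w
      have hbq0 : 0 ≤ b*q := by positivity
      have hsplit : Real.exp (-(w/(2*q))) =
          Real.exp (-(W/(2*q))) * Real.exp (-((w-W)/(2*q))) := by
        rw [← Real.exp_add]; congr 1; field_simp; ring
      have ha := Real.add_one_le_exp (-(W/(2*q)))
      have hc := Real.add_one_le_exp (-((w-W)/(2*q)))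
      have ha0 : (0:ℝ) < Real.exp (-(W/(2*q))) := Real.exp_pos _
      have hc0 : (0:ℝ) < Real.exp (-((w-W)/(2*q))) := Real.exp_pos _
      have hla : 0 ≤ 1 - W/(2*q) := by
        rw [sub_nonneg, div_le_one (by linarith)]; linarith
      have hlc : 0 ≤ 1 - (w-W)/(2*q) := by
        rw [sub_nonneg, div_le_one (by linarith)]; linarith
      have hstep : W * (1 - W/(2*q)) ≤ w * ((1 - W/(2*q)) * (1 - (w-W)/(2*q))) := by
        have expand : w * ((1 - W/(2*q)) * (1 - (w-W)/(2*q))) - W * (1 - W/(2*q)) =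
            (1 - W/(2*q)) * ((w - W) * (1 - w/(2*q))) := by ring
        have hnn : 0 ≤ (1 - W/(2*q)) * ((w - W) * (1 - w/(2*q))) :=
          mul_nonneg hla (mul_nonneg (by linarith)
            (by rw [sub_nonneg, div_le_one (by linarith)]; linarith))
        linarith
      have hprod : (1 - W/(2*q)) * (1 - (w-W)/(2*q)) ≤
          Real.exp (-(W/(2*q))) * Real.exp (-((w-W)/(2*q))) := by
        apply mul_le_mul (by linarith) (by linarith) hlc (le_of_lt ha0)
      have hfin : W * (1 - W/(2*q)) ≤ w * Real.exp (-(w/(2*q))) := by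
        rw [hsplit]
        calc W * (1 - W/(2*q)) ≤ w * ((1 - W/(2*q)) * (1 - (w-W)/(2*q))) := hstep
          _ ≤ w * (Real.exp (-(W/(2*q))) * Real.exp (-((w-W)/(2*q)))) := by
              apply mul_le_mul_of_nonneg_left hprod (by linarith)
      have hWexp : 1/2 + Real.log (2*q)/2 - W^2/(4*q) = (W * (1 - W/(2*q)))/2 := by
        rw [hW]; ring
      have hhalf : w/2 * Real.exp (-(w/(2*q))) = (w * Real.exp (-(w/(2*q))))/2 := by ring
      rw [hWexp]
      linarith
  -- assemble
  have hE : E q b ≤ (1 + (2/3:ℝ)^q) * 2^q *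
      Real.exp (-(b*q + w/2 * Real.exp (-(w/(2*q))))) := by
    have comb : E q b ≤ ((1 + (2/3:ℝ)^q) * Real.exp (-(b*q))) *
        (2^q * Real.exp (-(w/2 * Real.exp (-(w/(2*q)))))) := by
      apply mul_le_mul f1 f2 (by positivity) (by positivity)
    calc E q b ≤ _ := comb
      _ = (1 + (2/3:ℝ)^q) * 2^q * Real.exp (-(b*q + w/2 * Real.exp (-(w/(2*q))))) := by
          rw [show -(b*q + w/2 * Real.exp (-(w/(2*q)))) =
            -(b*q) + -(w/2 * Real.exp (-(w/(2*q)))) by ring, Real.exp_add]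
          ring
  have hfinal : Real.exp (-(b*q + w/2 * Real.exp (-(w/(2*q))))) ≤
      Real.exp (W^2/(4*q)) * Real.exp (-(1:ℝ)/2) / Real.sqrt (2*q) := by
    have hs : Real.sqrt (2*q) = Real.exp (Real.log (2*q)/2) := sqrt_eq_exp' (by linarith)
    rw [hs, ← Real.exp_add, ← Real.exp_sub, Real.exp_le_exp]
    linarith
  calc E q b ≤ (1 + (2/3:ℝ)^q) * 2^q *
        Real.exp (-(b*q + w/2 * Real.exp (-(w/(2*q))))) := hE
    _ ≤ (1 + (2/3:ℝ)^q) * 2^q *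
        (Real.exp (W^2/(4*q)) * Real.exp (-(1:ℝ)/2) / Real.sqrt (2*q)) := by
        apply mul_le_mul_of_nonneg_left hfinal (by positivity)
    _ = (1 + (2/3:ℝ)^q) * 2^q * Real.exp ((Real.log (2*q)+1)^2/(4*q)) *
        Real.exp (-(1:ℝ)/2) / Real.sqrt (2*q) := by
        rw [hW]; ring


lemma E_symm (q b : ℝ) : E q (1-b) = E q b := by
  unfold E
  rw [sub_sub_cancel]
  rw [add_comm ((1-b) ^ q), add_comm ((1-b) ^ (1/q))]

noncomputable def Mq (q : ℝ) : ℝ :=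
  max (max (2^q * Real.exp (-(q/2))) (2 * (0.6:ℝ)^q * 2^q))
      ((1 + (2/3:ℝ)^q) * 2^q * Real.exp ((Real.log (2*q)+1)^2/(4*q)) *
        Real.exp (-(1:ℝ)/2) / Real.sqrt (2*q))

lemma E_le_Mq_half {q b : ℝ} (hq : 100 ≤ q) (hb0 : 0 ≤ b) (hb1 : b ≤ 1/2) :
    E q b ≤ Mq q := by
  rcases le_total b (Real.exp (-(2*q))) with h | h
  · exact le_trans (regionB hq hb0 h) (le_trans (le_max_left _ _) (le_max_left _ _))
  · rcases le_total b 0.4 with h2 | h2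
    · exact le_trans (regionC hq h h2) (le_max_right _ _)
    · exact le_trans (regionA hq h2 hb1) (le_trans (le_max_right _ _) (le_max_left _ _))

lemma E_le_Mq {q b : ℝ} (hq : 100 ≤ q) (hb0 : 0 ≤ b) (hb1 : b ≤ 1) :
    E q b ≤ Mq q := by
  rcases le_total b (1/2) with h | h
  · exact E_le_Mq_half hq hb0 h
  · rw [← E_symm q b]
    exact E_le_Mq_half hq (by linarith) (by linarith)

lemma R_eq_E (p b : ℝ) : R p b = E (p-1) b := rfl

lemma Cp_le_Mq {p : ℝ} (hp : 101 ≤ p) : Cp p ≤ Mq (p-1) := by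
  apply Real.sSup_le
  · rintro x ⟨b, hb, rfl⟩
    exact E_le_Mq (by linarith) hb.1 hb.2
  · have h1 : (0:ℝ) < 2^(p-1) * Real.exp (-((p-1)/2)) := by positivity
    calc (0:ℝ) ≤ 2^(p-1) * Real.exp (-((p-1)/2)) := h1.le
      _ ≤ Mq (p-1) := le_trans (le_of_eq (by norm_num)) (le_trans (le_max_left _ _) (le_max_left _ _))

lemma Cp_ge {p : ℝ} (hp : 101 ≤ p) :
    Real.exp (-(1:ℝ)/2) * 2^(p-1) / Real.sqrt (2*(p-1)) *
      Real.exp (-(3/(2*(p-1))) - (Real.log (2*(p-1)) + 1/(p-1))^2/(2*(p-1))) ≤ Cp p := by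
  have hq : (100:ℝ) ≤ p - 1 := by linarith
  have hmem : R p (1/(2*(p-1))) ∈ (fun b => R p b) '' Set.Icc (0:ℝ) 1 := by
    refine ⟨1/(2*(p-1)), ⟨by positivity, ?_⟩, rfl⟩
    rw [div_le_one (by linarith)]
    linarith
  have hbdd : BddAbove ((fun b => R p b) '' Set.Icc (0:ℝ) 1) := by
    refine ⟨Mq (p-1), ?_⟩
    rintro x ⟨b, hb, rfl⟩
    exact E_le_Mq (by linarith) hb.1 hb.2
  calc Real.exp (-(1:ℝ)/2) * 2^(p-1) / Real.sqrt (2*(p-1)) *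
      Real.exp (-(3/(2*(p-1))) - (Real.log (2*(p-1)) + 1/(p-1))^2/(2*(p-1)))
      ≤ E (p-1) (1/(2*(p-1))) := lowerE hq
    _ = R p (1/(2*(p-1))) := (R_eq_E _ _).symm
    _ ≤ Cp p := le_csSup hbdd hmem
lemma sqrt_le_self' {x : ℝ} (hx : 1 ≤ x) : Real.sqrt x ≤ x := by
  calc Real.sqrt x ≤ Real.sqrt (x^2) := Real.sqrt_le_sqrt (by nlinarith)
    _ = x := Real.sqrt_sq (by linarith)

lemma poly_exp_decay {c : ℝ} (hc : 0 < c) :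
    Tendsto (fun p : ℝ => p * Real.exp (-(c*p))) atTop (nhds 0) := by
  have T : Tendsto (fun p : ℝ => c*p) atTop atTop := tendsto_id.const_mul_atTop hc
  have h := ((tendsto_pow_mul_exp_neg_atTop_nhds_zero 1).comp T).const_mul (1/c)
  rw [mul_zero] at h
  apply h.congr
  intro p
  simp only [Function.comp_apply, pow_one]
  field_simp

lemma tendsto_sub_one : Tendsto (fun p : ℝ => p - 1) atTop atTop :=
  (tendsto_atTop_add_const_right atTop (-1) tendsto_id).congr
    (fun x => by simp only [id_eq]; ring)

lemma hgen0 (ea B s S : ℝ) (hB : B ≠ 0) (hs : s ≠ 0) :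
    ea * B / s * (S / (B*2)) = ea * S / (2*s) := by
  field_simp

lemma hgen1 (B E S : ℝ) (hB : B ≠ 0) : B * E * (S/(B*2)) = E*S/2 := by
  field_simp

lemma hgen2 (r B S : ℝ) (hB : B ≠ 0) : 2 * r * B * (S/(B*2)) = r * S := by
  field_simp

lemma hgen3 (B s S Ee : ℝ) (hB : B ≠ 0) (hs : s ≠ 0) (hE : Ee ≠ 0) :
    B * Ee⁻¹ / s * (S/(B*2)) = S/(2*s*Ee) := by
  field_simp

lemma T2u : Tendsto (fun u : ℝ => 2*u) atTop atTop := tendsto_id.const_mul_atTop two_pos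

lemma L1 : Tendsto (fun u : ℝ => (Real.log (2*u)+1)^2/(2*u)) atTop (nhds 0) := by
  have T2 : Tendsto (fun u : ℝ => (Real.log (2*u))^2/(2*u)) atTop (nhds 0) := by
    have h := (tendsto_pow_log_div_mul_add_atTop 1 0 2 one_ne_zero).comp T2u
    apply h.congr
    intro u
    simp [Function.comp_apply]
  have T1 : Tendsto (fun u : ℝ => (Real.log (2*u))/(2*u)) atTop (nhds 0) := by
    have h := (tendsto_pow_log_div_mul_add_atTop 1 0 1 one_ne_zero).comp T2u
    apply h.congr
    intro u
    simp [Function.comp_apply]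
  have T0 : Tendsto (fun u : ℝ => 1/(2*u)) atTop (nhds 0) :=
    tendsto_const_nhds.div_atTop T2u
  have hsum := T2.add ((T1.const_mul 2).add T0)
  rw [show (0:ℝ) + (2*0 + 0) = 0 by norm_num] at hsum
  apply hsum.congr
  intro u
  ring

lemma L2 : Tendsto (fun u : ℝ => (Real.log (2*u)+1)^2/(4*u)) atTop (nhds 0) := by
  have h := L1.const_mul (1/2)
  rw [mul_zero] at h
  apply h.congr
  intro u
  ring

lemma L3 : Tendsto (fun u : ℝ => -(3/(2*u)) - (Real.log (2*u)+1/u)^2/(2*u)) atTop (nhds 0) := by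
  have A : Tendsto (fun u : ℝ => 3/(2*u)) atTop (nhds 0) := tendsto_const_nhds.div_atTop T2u
  have B : Tendsto (fun u : ℝ => (Real.log (2*u)+1/u)^2/(2*u)) atTop (nhds 0) := by
    apply tendsto_of_tendsto_of_tendsto_of_le_of_le' tendsto_const_nhds L1
    · filter_upwards [eventually_ge_atTop (1:ℝ)] with u hu
      positivity
    · filter_upwards [eventually_ge_atTop (1:ℝ)] with u hu
      have hu0 : (0:ℝ) < u := by linarith
      have hl : 0 < Real.log (2*u) := Real.log_pos (by linarith)
      have h1 : 1/u ≤ 1 := by rw [div_le_one hu0]; linarith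
      have h2 : 0 < 1/u := by positivity
      gcongr
      all_goals linarith
  have h := A.neg.sub B
  rw [neg_zero, sub_zero] at h
  exact h

lemma exp_half_cancel : Real.exp (-(1:ℝ)/2) * Real.exp ((1:ℝ)/2) = 1 := by
  rw [← Real.exp_add]; norm_num

lemma sqrt_exp_one : Real.sqrt (Real.exp 1) = Real.exp ((1:ℝ)/2) := by
  rw [sqrt_eq_exp' (Real.exp_pos 1), Real.log_exp]

lemma two_rpow_split {p : ℝ} : (2:ℝ)^p = 2^(p-1) * 2 := by
  have h : (2:ℝ)^((p-1)+1) = 2^(p-1)*2 := by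
    rw [Real.rpow_add (by norm_num : (0:ℝ) < 2), Real.rpow_one]
  rw [← h]
  congr 1
  ring

lemma sqrt8e_eq {q : ℝ} (hq : 0 ≤ q) :
    Real.sqrt (8*Real.exp 1*q) = 2 * Real.sqrt (2*q) * Real.sqrt (Real.exp 1) := by
  rw [show 8*Real.exp 1*q = (2 * Real.sqrt (2*q) * Real.sqrt (Real.exp 1))^2 from ?_,
      Real.sqrt_sq (by positivity)]
  rw [mul_pow, mul_pow, Real.sq_sqrt (by linarith), Real.sq_sqrt (Real.exp_pos 1).le]
  ring

lemma factor_ge {p : ℝ} (hp : 101 ≤ p) :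
    1 ≤ Real.exp (-(1:ℝ)/2) * 2^(p-1) / Real.sqrt (2*(p-1)) *
      (Real.sqrt (8*Real.exp 1*p) / 2^p) := by
  have hq0 : (0:ℝ) < p - 1 := by linarith
  have hs0 : 0 < Real.sqrt (2*(p-1)) := Real.sqrt_pos.2 (by linarith)
  have h2q0 : (0:ℝ) < 2^(p-1) := Real.rpow_pos_of_pos (by norm_num) _
  have expand : Real.exp (-(1:ℝ)/2) * 2^(p-1) / Real.sqrt (2*(p-1)) *
      (Real.sqrt (8*Real.exp 1*p) / 2^p) =
      Real.exp (-(1:ℝ)/2) * Real.sqrt (8*Real.exp 1*p) / (2*Real.sqrt (2*(p-1))) := by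
    rw [two_rpow_split (p := p), hgen0 _ _ _ _ (ne_of_gt h2q0) (ne_of_gt hs0)]
  rw [expand, le_div_iff₀ (by positivity)]
  have hmono : Real.sqrt (8*Real.exp 1*(p-1)) ≤ Real.sqrt (8*Real.exp 1*p) := by
    apply Real.sqrt_le_sqrt
    nlinarith [Real.exp_pos 1]
  calc 1 * (2*Real.sqrt (2*(p-1)))
      = Real.exp (-(1:ℝ)/2) * (2 * Real.sqrt (2*(p-1)) * Real.sqrt (Real.exp 1)) := by
        rw [sqrt_exp_one]
        linear_combination (2*Real.sqrt (2*(p-1))) * exp_half_cancel.symm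
    _ = Real.exp (-(1:ℝ)/2) * Real.sqrt (8*Real.exp 1*(p-1)) := by rw [sqrt8e_eq hq0.le]
    _ ≤ Real.exp (-(1:ℝ)/2) * Real.sqrt (8*Real.exp 1*p) :=
        mul_le_mul_of_nonneg_left hmono (Real.exp_pos _).le

theorem stmt18 :
    Tendsto (fun p : ℝ => Cp p * Real.sqrt (8 * Real.exp 1 * p) / 2 ^ p)
      atTop (nhds 1) := by
  set low : ℝ → ℝ := fun p =>
    Real.exp (-(3/(2*(p-1))) - (Real.log (2*(p-1)) + 1/(p-1))^2/(2*(p-1))) with hlow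
  set up : ℝ → ℝ := fun p => Mq (p-1) * (Real.sqrt (8*Real.exp 1*p) / 2^p) with hup
  have hlowlim : Tendsto low atTop (nhds 1) := by
    have h := (Real.continuous_exp.tendsto 0).comp (L3.comp tendsto_sub_one)
    rw [Real.exp_zero] at h
    exact h
  have huplim : Tendsto up atTop (nhds 1) := by
    have hc_nonneg : ∀ p : ℝ, 0 ≤ Real.sqrt (8*Real.exp 1*p) / 2^p := by
      intro p
      positivity
    have hsplit : up = fun p =>
        max (max (2^(p-1) * Real.exp (-((p-1)/2)) * (Real.sqrt (8*Real.exp 1*p) / 2^p))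
          (2 * (0.6:ℝ)^(p-1) * 2^(p-1) * (Real.sqrt (8*Real.exp 1*p) / 2^p)))
          ((1 + (2/3:ℝ)^(p-1)) * 2^(p-1) * Real.exp ((Real.log (2*(p-1))+1)^2/(4*(p-1))) *
            Real.exp (-(1:ℝ)/2) / Real.sqrt (2*(p-1)) * (Real.sqrt (8*Real.exp 1*p) / 2^p)) := by
      funext p
      rw [hup]
      show Mq (p-1) * (Real.sqrt (8*Real.exp 1*p) / 2^p) = _
      rw [Mq, max_mul_of_nonneg _ _ (hc_nonneg p), max_mul_of_nonneg _ _ (hc_nonneg p)]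
    rw [hsplit]
    have hb1 : Tendsto (fun p : ℝ =>
        2^(p-1) * Real.exp (-((p-1)/2)) * (Real.sqrt (8*Real.exp 1*p) / 2^p))
        atTop (nhds 0) := by
      have hmaj : Tendsto (fun p : ℝ =>
          (4*Real.exp 1*Real.exp ((1:ℝ)/2)) * (p * Real.exp (-((1/2)*p)))) atTop (nhds 0) := by
        have h := (poly_exp_decay (show (0:ℝ) < 1/2 by norm_num)).const_mul
          (4*Real.exp 1*Real.exp ((1:ℝ)/2))
        rw [mul_zero] at h
        exact h
      apply tendsto_of_tendsto_of_tendsto_of_le_of_le' tendsto_const_nhds hmaj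
      · filter_upwards [eventually_ge_atTop (101:ℝ)] with p hp
        positivity
      · filter_upwards [eventually_ge_atTop (101:ℝ)] with p hp
        have h2q0 : (0:ℝ) < 2^(p-1) := Real.rpow_pos_of_pos (by norm_num) _
        have e1 : 2^(p-1) * Real.exp (-((p-1)/2)) * (Real.sqrt (8*Real.exp 1*p) / 2^p) =
            Real.exp (-((p-1)/2)) * Real.sqrt (8*Real.exp 1*p) / 2 := by
          rw [two_rpow_split (p := p), hgen1 _ _ _ (ne_of_gt h2q0)]
        rw [e1]
        have e2 : Real.exp (-((p-1)/2)) = Real.exp ((1:ℝ)/2) * Real.exp (-((1/2)*p)) := by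
          rw [← Real.exp_add]
          congr 1
          ring
        have hsq : Real.sqrt (8*Real.exp 1*p) ≤ 8*Real.exp 1*p := by
          apply sqrt_le_self'
          nlinarith [Real.exp_one_gt_d9]
        calc Real.exp (-((p-1)/2)) * Real.sqrt (8*Real.exp 1*p) / 2
            ≤ Real.exp (-((p-1)/2)) * (8*Real.exp 1*p) / 2 := by
              gcongr
          _ = (4*Real.exp 1*Real.exp ((1:ℝ)/2)) * (p * Real.exp (-((1/2)*p))) := by
              rw [e2]
              ring
    have hb2 : Tendsto (fun p : ℝ =>
        2 * (0.6:ℝ)^(p-1) * 2^(p-1) * (Real.sqrt (8*Real.exp 1*p) / 2^p))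
        atTop (nhds 0) := by
      have hL : (0:ℝ) < -Real.log 0.6 := by
        have := Real.log_neg (by norm_num : (0:ℝ) < 0.6) (by norm_num : (0.6:ℝ) < 1)
        linarith
      have hmaj : Tendsto (fun p : ℝ =>
          (8*Real.exp 1/0.6) * (p * Real.exp (-((-Real.log 0.6)*p)))) atTop (nhds 0) := by
        have h := (poly_exp_decay hL).const_mul (8*Real.exp 1/0.6)
        rw [mul_zero] at h
        exact h
      apply tendsto_of_tendsto_of_tendsto_of_le_of_le' tendsto_const_nhds hmaj
      · filter_upwards [eventually_ge_atTop (101:ℝ)] with p hp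
        positivity
      · filter_upwards [eventually_ge_atTop (101:ℝ)] with p hp
        have h2q0 : (0:ℝ) < 2^(p-1) := Real.rpow_pos_of_pos (by norm_num) _
        have e1 : 2 * (0.6:ℝ)^(p-1) * 2^(p-1) * (Real.sqrt (8*Real.exp 1*p) / 2^p) =
            (0.6:ℝ)^(p-1) * Real.sqrt (8*Real.exp 1*p) := by
          rw [two_rpow_split (p := p), hgen2 _ _ _ (ne_of_gt h2q0)]
        rw [e1]
        have hsq : Real.sqrt (8*Real.exp 1*p) ≤ 8*Real.exp 1*p := by
          apply sqrt_le_self'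
          nlinarith [Real.exp_one_gt_d9]
        have e2 : (0.6:ℝ)^(p-1) = (1/0.6) * Real.exp (-((-Real.log 0.6)*p)) := by
          rw [Real.rpow_def_of_pos (by norm_num : (0:ℝ) < 0.6)]
          rw [show Real.log 0.6 * (p-1) = -(-Real.log 0.6*p) + (-Real.log 0.6) by ring,
            Real.exp_add]
          rw [show Real.exp (-Real.log 0.6) = (Real.exp (Real.log 0.6))⁻¹ from Real.exp_neg _,
            Real.exp_log (by norm_num : (0:ℝ) < 0.6)]
          try ring
        calc (0.6:ℝ)^(p-1) * Real.sqrt (8*Real.exp 1*p)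
            ≤ (0.6:ℝ)^(p-1) * (8*Real.exp 1*p) := by
              gcongr
          _ = (8*Real.exp 1/0.6) * (p * Real.exp (-((-Real.log 0.6)*p))) := by
              rw [e2]
              try ring
    have hb3 : Tendsto (fun p : ℝ =>
        (1 + (2/3:ℝ)^(p-1)) * 2^(p-1) * Real.exp ((Real.log (2*(p-1))+1)^2/(4*(p-1))) *
          Real.exp (-(1:ℝ)/2) / Real.sqrt (2*(p-1)) * (Real.sqrt (8*Real.exp 1*p) / 2^p))
        atTop (nhds 1) := by
      have hA : Tendsto (fun p : ℝ => 1 + (2/3:ℝ)^(p-1)) atTop (nhds 1) := by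
        have h := ((tendsto_rpow_atTop_of_base_lt_one (2/3) (by norm_num) (by norm_num)).comp
          tendsto_sub_one).const_add 1
        rw [add_zero] at h
        exact h
      have hB : Tendsto (fun p : ℝ =>
          Real.exp ((Real.log (2*(p-1))+1)^2/(4*(p-1)))) atTop (nhds 1) := by
        have h := (Real.continuous_exp.tendsto 0).comp (L2.comp tendsto_sub_one)
        rw [Real.exp_zero] at h
        exact h
      have hC : Tendsto (fun p : ℝ =>
          2^(p-1) * Real.exp (-(1:ℝ)/2) / Real.sqrt (2*(p-1)) *
            (Real.sqrt (8*Real.exp 1*p) / 2^p)) atTop (nhds 1) := by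
        have hCeq : ∀ᶠ p : ℝ in atTop,
            Real.sqrt (p/(p-1)) =
            2^(p-1) * Real.exp (-(1:ℝ)/2) / Real.sqrt (2*(p-1)) *
              (Real.sqrt (8*Real.exp 1*p) / 2^p) := by
          filter_upwards [eventually_ge_atTop (101:ℝ)] with p hp
          have hq0 : (0:ℝ) < p - 1 := by linarith
          have hs0 : 0 < Real.sqrt (2*(p-1)) := Real.sqrt_pos.2 (by linarith)
          have h2q0 : (0:ℝ) < 2^(p-1) := Real.rpow_pos_of_pos (by norm_num) _
          have hsE : (0:ℝ) < Real.sqrt (Real.exp 1) := Real.sqrt_pos.2 (Real.exp_pos 1)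
          have e1 : 2^(p-1) * Real.exp (-(1:ℝ)/2) / Real.sqrt (2*(p-1)) *
              (Real.sqrt (8*Real.exp 1*p) / 2^p) =
              Real.sqrt (8*Real.exp 1*p) / Real.sqrt (8*Real.exp 1*(p-1)) := by
            rw [two_rpow_split (p := p), sqrt8e_eq hq0.le, sqrt_exp_one,
              show Real.exp (-(1:ℝ)/2) = (Real.exp ((1:ℝ)/2))⁻¹ by
                rw [← Real.exp_neg]; norm_num,
              hgen3 _ _ _ _ (ne_of_gt h2q0) (ne_of_gt hs0) (Real.exp_ne_zero _)]
            try rw [mul_comm (Real.sqrt (2*(p-1))) (Real.exp ((1:ℝ)/2))]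
            try ring
          rw [e1, ← Real.sqrt_div (by positivity) ]
          congr 1
          rw [div_eq_div_iff (ne_of_gt hq0)
            (by nlinarith [Real.exp_pos 1] : (8*Real.exp 1*(p-1)) ≠ 0)]
          ring
        apply Tendsto.congr' hCeq
        have hfrac : Tendsto (fun p : ℝ => p/(p-1)) atTop (nhds 1) := by
          have h0 : Tendsto (fun p : ℝ => 1 + 1/(p-1)) atTop (nhds 1) := by
            have h := (tendsto_const_nhds.div_atTop tendsto_sub_one :
              Tendsto (fun p : ℝ => 1/(p-1)) atTop (nhds 0)).const_add 1
            rw [add_zero] at h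
            exact h
          apply h0.congr'
          filter_upwards [eventually_ge_atTop (2:ℝ)] with p hp
          have h1 : p - 1 ≠ 0 := by linarith
          field_simp; ring
        have h := (Real.continuous_sqrt.tendsto 1).comp hfrac
        rw [Real.sqrt_one] at h
        exact h
      have h := (hA.mul hB).mul hC
      rw [show ((1:ℝ)*1)*1 = 1 by norm_num] at h
      apply h.congr
      intro p
      ring
    have h := (hb1.max hb2).max hb3
    rw [show (max (max (0:ℝ) 0) 1) = 1 by norm_num] at h
    exact h
  apply tendsto_of_tendsto_of_tendsto_of_le_of_le' hlowlim huplim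
  · filter_upwards [eventually_ge_atTop (101:ℝ)] with p hp
    rw [mul_div_assoc]
    calc low p = low p * 1 := (mul_one _).symm
      _ ≤ low p * (Real.exp (-(1:ℝ)/2) * 2^(p-1) / Real.sqrt (2*(p-1)) *
          (Real.sqrt (8*Real.exp 1*p) / 2^p)) := by
          apply mul_le_mul_of_nonneg_left (factor_ge hp) (Real.exp_pos _).le
      _ = (Real.exp (-(1:ℝ)/2) * 2^(p-1) / Real.sqrt (2*(p-1)) * low p) *
          (Real.sqrt (8*Real.exp 1*p) / 2^p) := by ring
      _ ≤ Cp p * (Real.sqrt (8*Real.exp 1*p) / 2^p) := by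
          apply mul_le_mul_of_nonneg_right (Cp_ge hp) (by positivity)
  · filter_upwards [eventually_ge_atTop (101:ℝ)] with p hp
    rw [mul_div_assoc]
    exact mul_le_mul_of_nonneg_right (Cp_le_Mq hp) (by positivity)
end

section
/- For p ∈ (1,∞) and its dual exponent q (1/p + 1/q = 1), the best constants satisfy C_p^{1/√(p−1)} = C_q^{1/√(q−1)}, where C_p = sup_{b∈[0,1]} R(p,b) with R(p,b) = (b^{p−1}+(1−b)^{p−1})·(b^{1/(p−1)}+(1−b)^{1/(p−1)})^{p−1}. -/
open Real Set

lemma R_nonneg (p b : ℝ) (hb : b ∈ Set.Icc (0:ℝ) 1) : 0 ≤ R p b := by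
  obtain ⟨h0, h1⟩ := hb
  have h1' : (0:ℝ) ≤ 1 - b := by linarith
  exact mul_nonneg (add_nonneg (Real.rpow_nonneg h0 _) (Real.rpow_nonneg h1' _))
    (Real.rpow_nonneg (add_nonneg (Real.rpow_nonneg h0 _) (Real.rpow_nonneg h1' _)) _)

lemma R_cont (p : ℝ) (hp : 1 < p) : Continuous (R p) := by
  have hp1 : 0 < p - 1 := by linarith
  have hp2 : 0 < 1 / (p - 1) := by positivity
  have c1 : Continuous fun b : ℝ => b ^ (p - 1) := by
    rw [continuous_iff_continuousAt]
    exact fun x => Real.continuousAt_rpow_const x _ (Or.inr hp1.le)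
  have c2 : Continuous fun b : ℝ => b ^ (1 / (p - 1)) := by
    rw [continuous_iff_continuousAt]
    exact fun x => Real.continuousAt_rpow_const x _ (Or.inr hp2.le)
  have csub : Continuous fun b : ℝ => 1 - b := by continuity
  have c1' : Continuous fun b : ℝ => (1 - b) ^ (p - 1) := c1.comp csub
  have c2' : Continuous fun b : ℝ => (1 - b) ^ (1 / (p - 1)) := c2.comp csub
  exact (c1.add c1').mul ((c2.add c2').rpow_const fun x => Or.inr hp1.le)

lemma bddR (p : ℝ) (hp : 1 < p) : BddAbove ((fun b => R p b) '' Set.Icc (0:ℝ) 1) :=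
  (isCompact_Icc.image (R_cont p hp)).bddAbove

lemma Cp_nonneg (p : ℝ) (hp : 1 < p) : 0 ≤ Cp p := by
  have h : R p 0 ≤ Cp p :=
    le_csSup (bddR p hp) ⟨0, by simp, rfl⟩
  have := R_nonneg p 0 (by simp)
  linarith

lemma R_dual (p q b : ℝ) (hp : 1 < p) (hq : 1 < q) (hq1 : q - 1 = 1 / (p - 1))
    (hb : b ∈ Set.Icc (0:ℝ) 1) : R q b = (R p b) ^ (q - 1) := by
  obtain ⟨h0, h1⟩ := hb
  have h1' : (0:ℝ) ≤ 1 - b := by linarith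
  have hp1 : 0 < p - 1 := by linarith
  have hA : 0 ≤ b ^ (p - 1) + (1 - b) ^ (p - 1) :=
    add_nonneg (Real.rpow_nonneg h0 _) (Real.rpow_nonneg h1' _)
  have hB : 0 ≤ b ^ (1 / (p - 1)) + (1 - b) ^ (1 / (p - 1)) :=
    add_nonneg (Real.rpow_nonneg h0 _) (Real.rpow_nonneg h1' _)
  rw [R, R, hq1, one_div_one_div, Real.mul_rpow hA (Real.rpow_nonneg hB _), ← Real.rpow_mul hB,
    mul_one_div, div_self (ne_of_gt hp1), Real.rpow_one, mul_comm]

lemma Cp_le (p q : ℝ) (hp : 1 < p) (hq : 1 < q) (hq1 : q - 1 = 1 / (p - 1)) :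
    Cp q ≤ Cp p ^ (q - 1) := by
  have hqn : (0:ℝ) ≤ q - 1 := by linarith
  rw [Cp]
  have hne : ((fun b => R q b) '' Set.Icc (0:ℝ) 1).Nonempty := ⟨R q 0, ⟨0, by simp, rfl⟩⟩
  apply csSup_le hne
  rintro x ⟨b, hb, rfl⟩
  show R q b ≤ Cp p ^ (q - 1)
  rw [R_dual p q b hp hq hq1 hb]
  exact Real.rpow_le_rpow (R_nonneg p b hb) (le_csSup (bddR p hp) ⟨b, hb, rfl⟩) hqn

lemma Cp_dual (p q : ℝ) (hp : 1 < p) (hq : 1 < q) (hpq : 1 / p + 1 / q = 1) :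
    Cp q = Cp p ^ (q - 1) := by
  have hp0 : p ≠ 0 := by linarith
  have hq0 : q ≠ 0 := by linarith
  have hpq' : (p - 1) * (q - 1) = 1 := by
    field_simp at hpq; nlinarith
  have hq1 : q - 1 = 1 / (p - 1) := by
    rw [eq_div_iff (ne_of_gt (by linarith : (0:ℝ) < p - 1))]; nlinarith [hpq']
  have hp1 : p - 1 = 1 / (q - 1) := by
    rw [eq_div_iff (ne_of_gt (by linarith : (0:ℝ) < q - 1))]; nlinarith [hpq']
  refine le_antisymm (Cp_le p q hp hq hq1) ?_
  have h2 := Cp_le q p hq hp hp1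
  calc Cp p ^ (q - 1) ≤ (Cp q ^ (p - 1)) ^ (q - 1) :=
        Real.rpow_le_rpow (Cp_nonneg p hp) h2 (by linarith)
    _ = Cp q := by
        rw [← Real.rpow_mul (Cp_nonneg q hq), hpq', Real.rpow_one]

theorem stmt19 (p q : ℝ) (hp : 1 < p) (hq : 1 < q) (hpq : 1 / p + 1 / q = 1) :
    Cp p ^ (1 / Real.sqrt (p - 1)) = Cp q ^ (1 / Real.sqrt (q - 1)) := by
  have hq1 : 0 < q - 1 := by linarith
  have hp1 : 0 < p - 1 := by linarith
  have hp0 : p ≠ 0 := by linarith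
  have hq0 : q ≠ 0 := by linarith
  have hpq' : (p - 1) * (q - 1) = 1 := by
    field_simp at hpq; nlinarith
  rw [Cp_dual p q hp hq hpq, ← Real.rpow_mul (Cp_nonneg p hp)]
  congr 1
  rw [mul_one_div, Real.div_sqrt]
  have hsq : Real.sqrt (p - 1) * Real.sqrt (q - 1) = 1 := by
    rw [← Real.sqrt_mul hp1.le, hpq', Real.sqrt_one]
  have hs : Real.sqrt (p - 1) ≠ 0 := by positivity
  field_simp
  linarith [hsq]
end
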